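/- arXiv:2005.06018 — 8 statements merged into one kernel-verified Lean document; each statement's English description precedes it below -/
import Mathlib

section
/- Let Y₁,...,Y_d be i.i.d. random variables taking values ±1 with P(Y_i = 1) = p. If d = 2 and p ≥ 4/9, then the random variable Bin(∑_{i=1}^2 (Y_i + 1), 1/2) (a binomial thinning with parameter 1/2 of the sum ∑(Y_i+1)) is log-concave. -/
/-!
Thinning `S ∈ {0, 2, 4}` with parameter `1/2` gives the mass function
`((4 - 3p)²/16, p(4 - 3p)/4, p(4 - p)/8, p²/4, p²/16)` on `{0, …, 4}`. The defect
`Pₙ² - Pₙ₋₁Pₙ₊₁` is `p(4 - 3p)²(9p - 4)/128` at `n = 1`, `p²(13p² - 24p + 16)/64` at `n = 2`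
and `p³(9p - 4)/128` at `n = 3`; the middle quadratic has negative discriminant, so
log-concavity comes down to `9p ≥ 4`.
-/

/-- No internal zeros in the sequence `P`. -/
def NoInternalZeros (P : ℕ → ℝ) : Prop :=
  ∀ i j k : ℕ, i ≤ j → j ≤ k → 0 < P i → 0 < P k → 0 < P j

/-- A distribution on ℕ is log-concave: no internal zeros and
`P (n-1) * P (n+1) ≤ (P n)^2` for all `n ≥ 1`. -/
def LogConcavePMF (P : ℕ → ℝ) : Prop :=
  NoInternalZeros P ∧ ∀ n : ℕ, 1 ≤ n → P (n - 1) * P (n + 1) ≤ (P n) ^ 2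

/-- The mass function of `Bin(∑_{i=1}^2 (Y_i + 1), 1/2)`, where `Y₁, Y₂` are i.i.d. `±1`
with `P(Y_i = 1) = p`: the sum `S = (Y₁+1)+(Y₂+1)` equals `0, 2, 4` with probabilities
`(1-p)², 2p(1-p), p²`, and the result is a binomial thinning of `S` with parameter `1/2`. -/
noncomputable def thinnedPMF (p : ℝ) : ℕ → ℝ := fun k =>
  (1 - p) ^ 2 * (if k = 0 then 1 else 0)
    + 2 * p * (1 - p) * ((Nat.choose 2 k : ℝ) * (1 / 2) ^ 2)
    + p ^ 2 * ((Nat.choose 4 k : ℝ) * (1 / 2) ^ 4)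

section FiniteSupport

variable {P : ℕ → ℝ} {N : ℕ}

theorem noInternalZeros_of_pos_of_eq_zero (hpos : ∀ j ≤ N, 0 < P j)
    (hzero : ∀ k, N < k → P k = 0) : NoInternalZeros P := by
  intro i j k _ hjk _ hk
  apply hpos
  by_contra! hNj
  exact hk.ne' (hzero k (hNj.trans_le hjk))

theorem logConcavePMF_of_pos_of_eq_zero (hpos : ∀ j ≤ N, 0 < P j)
    (hzero : ∀ k, N < k → P k = 0)
    (hmul_le_sq : ∀ n, 1 ≤ n → n < N → P (n - 1) * P (n + 1) ≤ P n ^ 2) :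
    LogConcavePMF P := by
  refine ⟨noInternalZeros_of_pos_of_eq_zero hpos hzero, fun n hn => ?_⟩
  rcases lt_or_ge n N with hnN | hNn
  · exact hmul_le_sq n hn hnN
  · rw [hzero (n + 1) (by omega), mul_zero]
    exact sq_nonneg _

end FiniteSupport

namespace thinnedPMF

variable (p : ℝ)

theorem apply_zero : thinnedPMF p 0 = (4 - 3 * p) ^ 2 / 16 := by
  norm_num [thinnedPMF, Nat.choose]; ring

theorem apply_one : thinnedPMF p 1 = p * (4 - 3 * p) / 4 := by
  norm_num [thinnedPMF, Nat.choose]; ring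

theorem apply_two : thinnedPMF p 2 = p * (4 - p) / 8 := by
  norm_num [thinnedPMF, Nat.choose]; ring

theorem apply_three : thinnedPMF p 3 = p ^ 2 / 4 := by
  norm_num [thinnedPMF, Nat.choose]; ring

theorem apply_four : thinnedPMF p 4 = p ^ 2 / 16 := by
  norm_num [thinnedPMF, Nat.choose]; ring

theorem apply_of_four_lt {k : ℕ} (hk : 4 < k) : thinnedPMF p k = 0 := by
  simp [thinnedPMF, Nat.choose_eq_zero_of_lt hk, Nat.choose_eq_zero_of_lt (by omega : 2 < k),
    show k ≠ 0 by omega]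

variable {p}

theorem pos (hp0 : 0 < p) (hp : p < 4 / 3) {k : ℕ} (hk : k ≤ 4) : 0 < thinnedPMF p k := by
  have h43 : 0 < 4 - 3 * p := by linarith
  have h4 : 0 < 4 - p := by linarith
  interval_cases k
  · rw [apply_zero]; positivity
  · rw [apply_one]; positivity
  · rw [apply_two]; positivity
  · rw [apply_three]; positivity
  · rw [apply_four]; positivity

theorem mul_le_sq (hp : 4 / 9 ≤ p) {n : ℕ} (hn : 1 ≤ n) (hn4 : n < 4) :
    thinnedPMF p (n - 1) * thinnedPMF p (n + 1) ≤ thinnedPMF p n ^ 2 := by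
  have hp0 : 0 ≤ p := by linarith
  have h94 : 0 ≤ 9 * p - 4 := by linarith
  rw [← sub_nonneg]
  interval_cases n
  · have hdefect : thinnedPMF p 1 ^ 2 - thinnedPMF p 0 * thinnedPMF p 2
        = p * (4 - 3 * p) ^ 2 * (9 * p - 4) / 128 := by
      rw [apply_zero, apply_one, apply_two]; ring
    rw [hdefect]; positivity
  · have hdefect : thinnedPMF p 2 ^ 2 - thinnedPMF p 1 * thinnedPMF p 3
        = p ^ 2 * (13 * p ^ 2 - 24 * p + 16) / 64 := by
      rw [apply_one, apply_two, apply_three]; ring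
    have hquad : 0 ≤ 13 * p ^ 2 - 24 * p + 16 := by nlinarith [sq_nonneg (13 * p - 12)]
    rw [hdefect]; positivity
  · have hdefect : thinnedPMF p 3 ^ 2 - thinnedPMF p 2 * thinnedPMF p 4
        = p ^ 3 * (9 * p - 4) / 128 := by
      rw [apply_two, apply_three, apply_four]; ring
    rw [hdefect]; positivity

end thinnedPMF

/-- For `d = 2` i.i.d. `±1` random variables `Y₁, Y₂` with
`P(Y_i = 1) = p ≥ 4/9`, the random variable `Bin((Y₁+1)+(Y₂+1), 1/2)` is log-concave. -/
theorem stmt3 (p : ℝ) (hp : 4 / 9 ≤ p) (hp1 : p ≤ 1) :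
    LogConcavePMF (thinnedPMF p) :=
  logConcavePMF_of_pos_of_eq_zero
    (fun _ hk => thinnedPMF.pos (by linarith) (by linarith) hk)
    (fun _ hk => thinnedPMF.apply_of_four_lt p hk)
    (fun _ hn hn4 => thinnedPMF.mul_le_sq hp hn hn4)
end

section
/- Let X be a random variable on the nonnegative integers, and define Y = Bin(X, q) to be the q-thinning of X. Then the size-bias transform of Y satisfies Y^s =_d 1 + Bin(X^s − 1, q), where X^s is the size-bias transform of X. -/
/-- The mass function of the size-bias transform of a distribution `P` on ℕ. -/
noncomputable def sizeBiasPMF (P : ℕ → ℝ) : ℕ → ℝ :=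
  fun k => (k : ℝ) * P k / (∑' n : ℕ, (n : ℝ) * P n)

/-- The mass function of the `q`-thinning `Bin(X, q)` of a distribution `P` on ℕ. -/
noncomputable def thinPMF (P : ℕ → ℝ) (q : ℝ) : ℕ → ℝ :=
  fun k => ∑' n : ℕ, P n * (Nat.choose n k : ℝ) * q ^ k * (1 - q) ^ (n - k)

section aux

variable {q : ℝ}

lemma binterm_nonneg (hq0 : 0 ≤ q) (hq1 : q ≤ 1) (n k : ℕ) :
    0 ≤ (Nat.choose n k : ℝ) * q ^ k * (1 - q) ^ (n - k) := by
  have h1 : (0:ℝ) ≤ 1 - q := by linarith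
  positivity

lemma binsum (x y : ℝ) (n : ℕ) :
    ∑ k ∈ Finset.range (n + 1), (Nat.choose n k : ℝ) * x ^ k * y ^ (n - k) = (x + y) ^ n := by
  rw [add_pow]
  apply Finset.sum_congr rfl
  intro k _
  ring

lemma binterm_le_one (hq0 : 0 ≤ q) (hq1 : q ≤ 1) (n k : ℕ) :
    (Nat.choose n k : ℝ) * q ^ k * (1 - q) ^ (n - k) ≤ 1 := by
  by_cases hk : k ≤ n
  · calc (Nat.choose n k : ℝ) * q ^ k * (1 - q) ^ (n - k)
        ≤ ∑ i ∈ Finset.range (n + 1), (Nat.choose n i : ℝ) * q ^ i * (1 - q) ^ (n - i) :=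
          Finset.single_le_sum (fun i _ => binterm_nonneg hq0 hq1 n i)
            (Finset.mem_range.mpr (Nat.lt_succ_of_le hk))
      _ = 1 := by rw [binsum]; simp
  · rw [Nat.choose_eq_zero_of_lt (lt_of_not_ge hk)]
    simp

/-- Binomial mean: `∑ k, k * C(n,k) q^k (1-q)^(n-k) = n*q`. -/
lemma binmean (q : ℝ) (n : ℕ) :
    ∑ k ∈ Finset.range (n + 1), (k : ℝ) * ((Nat.choose n k : ℝ) * q ^ k * (1 - q) ^ (n - k))
      = n * q := by
  cases n with
  | zero => simp
  | succ m =>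
    rw [Finset.sum_range_succ']
    simp only [Nat.cast_zero, zero_mul, add_zero]
    have key : ∀ j ∈ Finset.range (m + 1),
        ((j+1 : ℕ) : ℝ) * ((Nat.choose (m+1) (j+1) : ℝ) * q ^ (j+1) * (1 - q) ^ (m + 1 - (j+1)))
          = ((m:ℝ)+1) * q * ((Nat.choose m j : ℝ) * q ^ j * (1 - q) ^ (m - j)) := by
      intro j _
      have h : (m+1) * Nat.choose m j = Nat.choose (m+1) (j+1) * (j+1) :=
        Nat.add_one_mul_choose_eq m j
      have h' : ((m:ℝ)+1) * (Nat.choose m j : ℝ) = (Nat.choose (m+1) (j+1) : ℝ) * ((j:ℝ)+1) := by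
        exact_mod_cast h
      have hsub : m + 1 - (j + 1) = m - j := by omega
      rw [hsub, pow_succ]
      push_cast
      linear_combination (-(q ^ j * q * (1 - q) ^ (m - j))) * h'
    rw [Finset.sum_congr rfl key, ← Finset.mul_sum, binsum]
    push_cast
    ring

end aux

/-- Let `Y = Bin(X, q)` be the `q`-thinning of a nonnegative
integer-valued random variable `X` with finite positive mean, and suppose
`E[Bin(X,q)] > 0`. Then `Y^s =_d 1 + Bin(X^s − 1, q)`. -/
theorem stmt4 (P : ℕ → ℝ) (q : ℝ) (hq0 : 0 < q) (hq1 : q < 1)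
    (hnonneg : ∀ n, 0 ≤ P n) (hsum : ∑' n, P n = 1)
    (hmean : Summable (fun n : ℕ => (n : ℝ) * P n))
    (hpos : 0 < ∑' n : ℕ, (n : ℝ) * P n) :
    sizeBiasPMF (thinPMF P q)
      = fun k => if k = 0 then 0
          else thinPMF (fun m => sizeBiasPMF P (m + 1)) q (k - 1) := by
  have hq0' : (0:ℝ) ≤ q := le_of_lt hq0
  have hq1' : q ≤ 1 := le_of_lt hq1
  set μ := ∑' n : ℕ, (n : ℝ) * P n with hμ
  have hμne : μ ≠ 0 := ne_of_gt hpos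
  have hqne : q ≠ 0 := ne_of_gt hq0
  -- summability of P
  have hPsum : Summable P := by
    by_contra h
    rw [tsum_eq_zero_of_not_summable h] at hsum
    norm_num at hsum
  -- the binomial kernel term
  set T : ℕ → ℕ → ℝ := fun n k => P n * (Nat.choose n k : ℝ) * q ^ k * (1 - q) ^ (n - k) with hT
  have hTnonneg : ∀ n k, 0 ≤ T n k := fun n k => by
    have := binterm_nonneg hq0' hq1' n k
    have := hnonneg n
    simp only [hT]
    nlinarith
  have hTle : ∀ n k, T n k ≤ P n := fun n k => by
    have h1 := binterm_le_one hq0' hq1' n k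
    have h2 := binterm_nonneg hq0' hq1' n k
    have h3 := hnonneg n
    simp only [hT]
    nlinarith
  have hTzero : ∀ n k, n < k → T n k = 0 := fun n k h => by
    simp only [hT, Nat.choose_eq_zero_of_lt h]; ring
  -- summability in n for fixed k
  have hTsummable : ∀ k, Summable (fun n => T n k) := fun k =>
    Summable.of_nonneg_of_le (fun n => hTnonneg n k) (fun n => hTle n k) hPsum
  have hkTsummable : ∀ k : ℕ, Summable (fun n => (k:ℝ) * T n k) := fun k =>
    (hTsummable k).mul_left _
  -- inner sum over k for fixed n
  have hinner : ∀ n, ∑' k : ℕ, (k:ℝ) * T n k = q * ((n:ℝ) * P n) := by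
    intro n
    have hfin : ∀ k ∉ Finset.range (n+1), (k:ℝ) * T n k = 0 := by
      intro k hk
      rw [hTzero n k (by simpa using Finset.mem_range.not.mp hk)]
      ring
    rw [tsum_eq_sum hfin]
    have : ∀ k ∈ Finset.range (n+1), (k:ℝ) * T n k
        = P n * ((k:ℝ) * ((Nat.choose n k : ℝ) * q ^ k * (1-q) ^ (n-k))) := by
      intro k _; simp only [hT]; ring
    rw [Finset.sum_congr rfl this, ← Finset.mul_sum, binmean]
    ring
  -- summability of the double sum
  have hF : Summable (fun p : ℕ × ℕ => ((p.2 : ℝ)) * T p.1 p.2) := by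
    rw [summable_prod_of_nonneg (fun p => mul_nonneg (Nat.cast_nonneg _) (hTnonneg p.1 p.2))]
    constructor
    · intro n
      apply summable_of_ne_finset_zero (s := Finset.range (n+1))
      intro k hk
      rw [hTzero n k (by simpa using Finset.mem_range.not.mp hk)]
      ring
    · exact (hmean.mul_left q).congr fun n => (hinner n).symm
  -- the denominator equals q * μ
  have hD : (∑' k : ℕ, (k:ℝ) * thinPMF P q k) = q * μ := by
    have h1 : ∀ k : ℕ, (k:ℝ) * thinPMF P q k = ∑' n, (k:ℝ) * T n k := by
      intro k
      simp only [thinPMF, hT]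
      exact (tsum_mul_left).symm
    calc (∑' k : ℕ, (k:ℝ) * thinPMF P q k)
        = ∑' (k : ℕ) (n : ℕ), (k:ℝ) * T n k := by
          exact tsum_congr h1
      _ = ∑' (n : ℕ) (k : ℕ), (k:ℝ) * T n k :=
          hF.tsum_comm' (fun n => by
            apply summable_of_ne_finset_zero (s := Finset.range (n+1))
            intro k hk
            rw [hTzero n k (by simpa using Finset.mem_range.not.mp hk)]
            ring) (fun k => hkTsummable k)
      _ = ∑' n : ℕ, q * ((n:ℝ) * P n) := tsum_congr hinner
      _ = q * μ := tsum_mul_left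
  funext k
  cases k with
  | zero => simp [sizeBiasPMF]
  | succ j =>
    simp only [Nat.succ_ne_zero, if_false, Nat.succ_sub_one]
    rw [sizeBiasPMF, hD]
    -- numerator manipulation
    have hnum : ((j:ℝ)+1) * thinPMF P q (j+1)
        = ∑' m : ℕ, ((j:ℝ)+1) * T (m+1) (j+1) := by
      have h1 : ((j:ℝ)+1) * thinPMF P q (j+1) = ∑' n, ((j:ℝ)+1) * T n (j+1) := by
        simp only [thinPMF, hT]
        exact (tsum_mul_left).symm
      rw [h1]
      have hs : Summable (fun n => ((j:ℝ)+1) * T n (j+1)) := (hTsummable _).mul_left _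
      rw [hs.tsum_eq_zero_add]
      have h0 : ((j:ℝ)+1) * T 0 (j+1) = 0 := by
        rw [hTzero 0 (j+1) (Nat.succ_pos j)]; ring
      rw [h0, zero_add]
    have hterm : ∀ m : ℕ, ((j:ℝ)+1) * T (m+1) (j+1) / (q * μ)
        = sizeBiasPMF P (m+1) * (Nat.choose m j : ℝ) * q ^ j * (1-q) ^ (m-j) := by
      intro m
      have h : (m+1) * Nat.choose m j = Nat.choose (m+1) (j+1) * (j+1) :=
        Nat.add_one_mul_choose_eq m j
      have h' : ((m:ℝ)+1) * (Nat.choose m j : ℝ) = (Nat.choose (m+1) (j+1) : ℝ) * ((j:ℝ)+1) := by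
        exact_mod_cast h
      have hsub : m + 1 - (j + 1) = m - j := by omega
      simp only [hT, sizeBiasPMF, ← hμ, hsub, pow_succ]
      push_cast
      field_simp
      linear_combination (-(P (m+1) * (1 - q) ^ (m - j))) * h'
    calc (↑(j+1) : ℝ) * thinPMF P q (j+1) / (q * μ)
        = (∑' m : ℕ, ((j:ℝ)+1) * T (m+1) (j+1)) / (q * μ) := by
          push_cast
          rw [hnum]
      _ = ∑' m : ℕ, ((j:ℝ)+1) * T (m+1) (j+1) / (q * μ) := by
          rw [tsum_div_const]
      _ = ∑' m : ℕ, sizeBiasPMF P (m+1) * (Nat.choose m j : ℝ) * q ^ j * (1-q) ^ (m-j) :=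
          tsum_congr hterm
      _ = thinPMF (fun m => sizeBiasPMF P (m + 1)) q j := rfl
end

section
/- Suppose a sequence of positive reals (μ_n) satisfies μ_{n+1} ≤ μ_n / (1 − e^{−q μ_n}) for all n where q > 0 is constant. Then there exists C > 0 such that μ_n ≤ C log n for all n ≥ 2. -/
/-!
Rescale to `ν n = q * μ n`, so that `ν (n + 1) ≤ φ (ν n)` with `φ t = t / (1 - exp (-t))`.
The map `φ` is increasing on `(0, ∞)`, its reciprocal being a secant slope of the convex
function `exp`, and `φ t - t = t / (exp t - 1)` decays exponentially. Hence
`φ (b + 2 log x) ≤ b + 2 log (x + 1)`: the excess `(b + 2 log x) / (exp b * x ^ 2 - 1)` is below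
`2 / (x + 1) ≤ 2 (log (x + 1) - log x)`. Monotonicity of `φ` then keeps `ν n` below the comparison
sequence `ν 1 + 2 log n`.
-/

open Real Set

lemma monotoneOn_div_one_sub_exp_neg :
    MonotoneOn (fun t : ℝ => t / (1 - exp (-t))) (Ioi 0) := by
  intro s (hs : 0 < s) t (ht : 0 < t) hst
  have slope := convexOn_exp.secant_mono (a := 0) (x := -t) (y := -s) trivial trivial trivial
    (by linarith) (by linarith) (by linarith)
  simp only [exp_zero, sub_zero, div_neg, ← neg_div, neg_sub] at slope
  have ht' : 0 < 1 - exp (-t) := sub_pos.mpr (exp_lt_one_iff.mpr (neg_lt_zero.mpr ht))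
  simpa only [inv_div] using inv_anti₀ (div_pos ht' ht) slope

lemma div_one_sub_exp_neg_eq {s : ℝ} (hs : s ≠ 0) :
    s / (1 - exp (-s)) = s + s / (exp s - 1) := by
  have : exp s - 1 ≠ 0 := by
    rw [sub_ne_zero]; exact fun h => hs (exp_eq_one_iff s |>.mp h)
  rw [exp_neg]
  field_simp
  ring

lemma inv_succ_le_log_succ_sub_log {x : ℝ} (hx : 0 < x) :
    (x + 1)⁻¹ ≤ log (x + 1) - log x := by
  have := one_sub_inv_le_log_of_pos (div_pos (by linarith : 0 < x + 1) hx)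
  rw [log_div (by linarith) hx.ne', inv_div] at this
  convert this using 1
  field_simp
  ring

lemma div_one_sub_exp_neg_add_two_mul_log_le {b x : ℝ} (hb : 0 < b) (hx : 1 ≤ x) :
    (b + 2 * log x) / (1 - exp (-(b + 2 * log x))) ≤ b + 2 * log (x + 1) := by
  set s := b + 2 * log x
  have hx0 : 0 < x := by linarith
  have hs : 0 < s := by have := log_nonneg hx; positivity
  have hexp : exp s = exp b * x ^ 2 := by
    simp only [s, exp_add, mul_comm (2:ℝ), exp_mul, exp_log hx0]; norm_cast
  have hden : 0 < exp s - 1 := by linarith [add_one_le_exp s]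
  have tail : s / (exp s - 1) ≤ 2 * (x + 1)⁻¹ := by
    have heb := add_one_le_exp b
    have hlog_le := log_le_sub_one_of_pos hx0
    rw [div_le_iff₀ hden, hexp]
    field_simp
    nlinarith [mul_nonneg hb.le (by nlinarith : 0 ≤ 2 * x ^ 2 - x - 1)]
  rw [div_one_sub_exp_neg_eq hs.ne']
  linarith [inv_succ_le_log_succ_sub_log hx0]

lemma le_add_two_mul_log_of_le_div_one_sub_exp_neg {ν : ℕ → ℝ} (hpos : ∀ n, 0 < ν n)
    (hrec : ∀ n, ν (n + 1) ≤ ν n / (1 - exp (-ν n))) {n : ℕ} (hn : 1 ≤ n) :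
    ν n ≤ ν 1 + 2 * log n := by
  induction n, hn using Nat.le_induction with
  | base => simp
  | succ n hn ih =>
    have hn' : (1 : ℝ) ≤ n := by exact_mod_cast hn
    have hb : 0 < ν 1 + 2 * log n := by have := log_nonneg hn'; linarith [hpos 1]
    calc ν (n + 1) ≤ ν n / (1 - exp (-ν n)) := hrec n
      _ ≤ (ν 1 + 2 * log n) / (1 - exp (-(ν 1 + 2 * log n))) :=
        monotoneOn_div_one_sub_exp_neg (hpos n) hb ih
      _ ≤ ν 1 + 2 * log (n + 1 : ℕ) := by
        push_cast; exact div_one_sub_exp_neg_add_two_mul_log_le (hpos 1) hn'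

/-- If a sequence of positive reals satisfies
`μ_{n+1} ≤ μ_n / (1 − e^{−q μ_n})` for a constant `q > 0`, then there is a constant
`C > 0` with `μ_n ≤ C log n` for all `n ≥ 2`. -/
theorem stmt6 (q : ℝ) (hq : 0 < q) (μ : ℕ → ℝ) (hpos : ∀ n, 0 < μ n)
    (hrec : ∀ n, μ (n + 1) ≤ μ n / (1 - Real.exp (-q * μ n))) :
    ∃ C : ℝ, 0 < C ∧ ∀ n : ℕ, 2 ≤ n → μ n ≤ C * Real.log n := by
  have hrec' : ∀ n, q * μ (n + 1) ≤ q * μ n / (1 - exp (-(q * μ n))) := fun n => by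
    rw [mul_div_assoc, ← neg_mul]; exact mul_le_mul_of_nonneg_left (hrec n) hq.le
  have hbound : ∀ n, 1 ≤ n → q * μ n ≤ q * μ 1 + 2 * log n := fun n =>
    le_add_two_mul_log_of_le_div_one_sub_exp_neg (fun n => mul_pos hq (hpos n)) hrec'
  have hlog2 : 0 < log 2 := log_pos one_lt_two
  refine ⟨μ 1 / log 2 + 2 / q, by have := hpos 1; positivity, fun n hn => ?_⟩
  have hlog : log 2 ≤ log n := log_le_log two_pos (by exact_mod_cast hn)
  have hμ1 : μ 1 ≤ μ 1 / log 2 * log n := by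
    rw [div_mul_eq_mul_div, le_div_iff₀ hlog2]; exact mul_le_mul_of_nonneg_left hlog (hpos 1).le
  have hμn : μ n ≤ μ 1 + 2 / q * log n := by
    refine le_of_mul_le_mul_left ?_ hq
    calc q * μ n ≤ q * μ 1 + 2 * log n := hbound n (by omega)
      _ = q * (μ 1 + 2 / q * log n) := by field_simp
  linarith
end

section
/- With the operator A from the DLAS tree recursion: if p ≤ 1/2, W is a nonnegative integer-valued random variable with finite mean, and X = max(W, 1), then P(AX = 0) ≥ 4^{−E[W] − 1} for all d ≥ 2. Consequently P(AW = 0) ≥ 4^{−E[W]−1}. -/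
/-- Convolution of two mass functions on ℕ. -/
def convPMF (f g : ℕ → ℝ) : ℕ → ℝ :=
  fun k => ∑ j ∈ Finset.range (k + 1), f j * g (k - j)

/-- Point mass at `0`. -/
def deltaPMF : ℕ → ℝ := fun k => if k = 0 then 1 else 0

/-- Distribution of the independent sum of a list of ℕ-valued distributions. -/
def convList : List (ℕ → ℝ) → (ℕ → ℝ)
  | [] => deltaPMF
  | f :: fs => convPMF f (convList fs)

/-- Mass function of `X = max(W, 1)` when `W` has mass function `P`. -/
def maxOnePMF (P : ℕ → ℝ) : ℕ → ℝ := fun k =>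
  if k = 0 then 0 else if k = 1 then P 0 + P 1 else P k

/-- Mass function of `X + Y` where `X ≥ 1` has mass function `M` (with `M 0 = 0`) and `Y`,
independent of `X`, is `±1`-valued with `P(Y = 1) = p`. -/
def stepPMF (p : ℝ) (M : ℕ → ℝ) : ℕ → ℝ := fun k =>
  p * M (k - 1) + (1 - p) * M (k + 1)

/-- The mass function of `(W + Y)⁺`. -/
def plusPMF (p : ℝ) (P : ℕ → ℝ) : ℕ → ℝ := fun k =>
  if k = 0 then (1 - p) * (P 0 + P 1) else p * P (k - 1) + (1 - p) * P (k + 1)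

/-!
With `t = 1 - 1/d`, `P(AX = 0) = E[t ^ (X₁ + Y₁ + ⋯ + X_d + Y_d)] = (E[t ^ (X + Y)]) ^ d`.
Independence gives `E[t ^ (X + Y)] = E[t ^ X] (p t + (1 - p) / t)`, and the second factor is
`≥ 1` exactly when `(1 - t)(1 - p - p t) ≥ 0`, which holds for `p ≤ 1/2`. Jensen gives
`E[t ^ X] ≥ t ^ E[X] ≥ t ^ (E[W] + 1)`, and AM-GM gives `t ^ d ≥ 1/4`. Since `(W + Y)⁺ ≤ X + Y`
pointwise, the same bound holds for `AW`.
-/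

open Finset

section GeneratingFunctions

variable {f g : ℕ → ℝ} {t a b : ℝ}

lemma convPMF_mul_pow_eq_sum (f g : ℕ → ℝ) (t : ℝ) (k : ℕ) :
    convPMF f g k * t ^ k = ∑ j ∈ range (k + 1), f j * t ^ j * (g (k - j) * t ^ (k - j)) := by
  rw [convPMF, sum_mul]
  refine sum_congr rfl fun j hj => ?_
  rw [← pow_mul_pow_sub t (mem_range_succ_iff.mp hj)]
  ring

lemma HasSum.convPMF_mul_pow (hf : HasSum (fun n => f n * t ^ n) a)
    (hg : HasSum (fun n => g n * t ^ n) b) :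
    HasSum (fun n => convPMF f g n * t ^ n) (a * b) := by
  have h := hasSum_sum_range_mul_of_summable_norm (f := fun n => f n * t ^ n)
    (g := fun n => g n * t ^ n) hf.summable.abs hg.summable.abs
  rw [hf.tsum_eq, hg.tsum_eq] at h
  exact h.congr_fun (convPMF_mul_pow_eq_sum f g t)

lemma hasSum_convList_mul_pow (fs : List (ℕ → ℝ))
    (hfs : ∀ f ∈ fs, Summable fun n => f n * t ^ n) :
    HasSum (fun n => convList fs n * t ^ n) (fs.map fun f => ∑' n, f n * t ^ n).prod := by
  induction fs with
  | nil =>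
    convert hasSum_ite_eq 0 (1 : ℝ) using 1
    · ext n
      cases n <;> simp [convList, deltaPMF]
    · simp
  | cons f fs ih =>
    simp only [List.forall_mem_cons] at hfs
    exact hfs.1.hasSum.convPMF_mul_pow (ih hfs.2)

lemma thinPMF_convList_replicate_zero (d : ℕ) {q : ℝ}
    (hf : HasSum (fun n => f n * (1 - q) ^ n) a) :
    thinPMF (convList (List.replicate d f)) q 0 = a ^ d := by
  have h := hasSum_convList_mul_pow (t := 1 - q) (List.replicate d f) (by simp [hf.summable])
  simp only [List.map_replicate, List.prod_replicate, hf.tsum_eq] at h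
  simpa [thinPMF] using h.tsum_eq

lemma summable_mul_pow_of_nonneg (hf : ∀ n, 0 ≤ f n) (hs : Summable f) (ht0 : 0 ≤ t)
    (ht1 : t ≤ 1) : Summable fun n => f n * t ^ n :=
  hs.of_nonneg_of_le (fun n => mul_nonneg (hf n) (pow_nonneg ht0 n))
    fun n => mul_le_of_le_one_right (hf n) (pow_le_one₀ ht0 ht1)

/-- Jensen: the tangent line `exp x ≥ 1 + x` at `x = (n - μ) log t`, averaged against `f`. -/
lemma rpow_mean_le_of_hasSum (hf : ∀ n, 0 ≤ f n) (h1 : HasSum f 1) {μ : ℝ}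
    (hμ : HasSum (fun n : ℕ => (n : ℝ) * f n) μ) (ht : 0 < t)
    (hft : HasSum (fun n => f n * t ^ n) a) : t ^ μ ≤ a := by
  set L := Real.log t
  have tangent : ∀ n : ℕ, t ^ μ * (1 + ((n : ℝ) - μ) * L) ≤ t ^ n := by
    intro n
    rw [← Real.rpow_natCast, Real.rpow_def_of_pos ht, Real.rpow_def_of_pos ht]
    calc Real.exp (L * μ) * (1 + ((n : ℝ) - μ) * L)
        ≤ Real.exp (L * μ) * Real.exp (((n : ℝ) - μ) * L) :=
          mul_le_mul_of_nonneg_left (by linarith [Real.add_one_le_exp (((n : ℝ) - μ) * L)])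
            (Real.exp_pos _).le
      _ = Real.exp (L * n) := by rw [← Real.exp_add]; ring_nf
  have hline : HasSum (fun n => f n * (t ^ μ * (1 + ((n : ℝ) - μ) * L))) (t ^ μ) := by
    have h := (h1.mul_left (t ^ μ * (1 - μ * L))).add (hμ.mul_left (t ^ μ * L))
    rw [show t ^ μ * (1 - μ * L) * 1 + t ^ μ * L * μ = t ^ μ by ring] at h
    exact h.congr_fun fun n => by ring
  exact hasSum_le (fun n => mul_le_mul_of_nonneg_left (tangent n) (hf n)) hline hft

end GeneratingFunctions

section StepPMF

variable {p t S : ℝ}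

-- `M 0 = 0` makes the truncated `0 - 1 = 0` in `stepPMF 0` harmless.
lemma hasSum_stepPMF_mul_pow (p : ℝ) {M : ℕ → ℝ} (hM0 : M 0 = 0) (ht : t ≠ 0)
    (hM : HasSum (fun n => M n * t ^ n) S) :
    HasSum (fun n => stepPMF p M n * t ^ n) ((p * t + (1 - p) / t) * S) := by
  have hdown : HasSum (fun n => M (n - 1) * t ^ n) (t * S) := by
    rw [← hasSum_nat_add_iff' 1]
    simpa [hM0, pow_succ, mul_comm, mul_left_comm] using hM.mul_left t
  have hup : HasSum (fun n => M (n + 1) * t ^ n) (S / t) := by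
    have h := ((hasSum_nat_add_iff' 1).mpr hM).div_const t
    simp only [sum_range_one, hM0, zero_mul, sub_zero] at h
    exact h.congr_fun fun n => by rw [pow_succ, ← mul_assoc, mul_div_cancel_right₀ _ ht]
  have h := (hdown.mul_left p).add (hup.mul_left (1 - p))
  rw [show p * (t * S) + (1 - p) * (S / t) = (p * t + (1 - p) / t) * S by ring] at h
  exact h.congr_fun fun n => by simp only [stepPMF]; ring

lemma one_le_mul_add_one_sub_div (hp : p ≤ 1 / 2) (ht0 : 0 < t) (ht1 : t ≤ 1) :
    1 ≤ p * t + (1 - p) / t := by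
  rw [← sub_nonneg]
  have key : 0 ≤ (1 - t) * (1 - p - p * t) := mul_nonneg (by linarith) (by nlinarith)
  have : p * t + (1 - p) / t - 1 = (1 - t) * (1 - p - p * t) / t := by field_simp; ring
  rw [this]
  positivity

end StepPMF

section MaxOnePMF

variable {P : ℕ → ℝ}

lemma maxOnePMF_nonneg (hP : ∀ n, 0 ≤ P n) (n : ℕ) : 0 ≤ maxOnePMF P n := by
  unfold maxOnePMF
  split_ifs
  exacts [le_rfl, add_nonneg (hP 0) (hP 1), hP n]

lemma maxOnePMF_eq (P : ℕ → ℝ) (n : ℕ) :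
    maxOnePMF P n = P n + (if n = 1 then P 0 else 0) - (if n = 0 then P 0 else 0) := by
  rcases n with _ | _ | n <;> simp [maxOnePMF]
  ring

lemma hasSum_maxOnePMF {a : ℝ} (h : HasSum P a) : HasSum (maxOnePMF P) a := by
  simpa [← maxOnePMF_eq] using (h.add (hasSum_ite_eq 1 (P 0))).sub (hasSum_ite_eq 0 (P 0))

lemma hasSum_natCast_mul_maxOnePMF {μ : ℝ} (h : HasSum (fun n : ℕ => (n : ℝ) * P n) μ) :
    HasSum (fun n : ℕ => (n : ℝ) * maxOnePMF P n) (μ + P 0) := by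
  refine (h.add (hasSum_ite_eq 1 (P 0))).congr_fun fun n => ?_
  rcases n with _ | _ | n <;> simp [maxOnePMF]
  ring

/-- The coupling `(W + Y)⁺ ≤ max(W, 1) + Y`: the two laws differ only when `W = 0, Y = 1`,
which moves mass `p P(W = 0)` from `2` down to `1`. -/
lemma plusPMF_eq (p : ℝ) (P : ℕ → ℝ) (n : ℕ) :
    plusPMF p P n = stepPMF p (maxOnePMF P) n + (if n = 1 then p * P 0 else 0)
      - (if n = 2 then p * P 0 else 0) := by
  rcases n with _ | _ | _ | n <;> simp [plusPMF, stepPMF, maxOnePMF] <;> ring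

lemma hasSum_plusPMF_mul_pow {p t a : ℝ}
    (h : HasSum (fun n => stepPMF p (maxOnePMF P) n * t ^ n) a) :
    HasSum (fun n => plusPMF p P n * t ^ n) (a + p * P 0 * t - p * P 0 * t ^ 2) := by
  refine ((h.add (hasSum_ite_eq 1 (p * P 0 * t))).sub
    (hasSum_ite_eq 2 (p * P 0 * t ^ 2))).congr_fun fun n => ?_
  rw [plusPMF_eq]
  rcases n with _ | _ | _ | n <;> simp <;> ring

lemma rpow_add_one_le_of_hasSum_maxOnePMF (hP : ∀ n, 0 ≤ P n) (h1 : HasSum P 1) {μ t G : ℝ}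
    (hμ : HasSum (fun n : ℕ => (n : ℝ) * P n) μ) (ht0 : 0 < t) (ht1 : t ≤ 1)
    (hG : HasSum (fun n => maxOnePMF P n * t ^ n) G) : t ^ (μ + 1) ≤ G := by
  have hP0 : P 0 ≤ 1 := le_hasSum h1 0 fun j _ => hP j
  exact (Real.rpow_le_rpow_of_exponent_ge ht0 ht1 (by linarith)).trans
    (rpow_mean_le_of_hasSum (maxOnePMF_nonneg hP) (hasSum_maxOnePMF h1)
      (hasSum_natCast_mul_maxOnePMF hμ) ht0 hG)

end MaxOnePMF

-- AM-GM for `d` numbers: two copies of `1 / 2` and `d - 2` ones.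
lemma one_div_four_le_one_sub_one_div_pow {d : ℕ} (hd : 2 ≤ d) :
    (1 / 4 : ℝ) ≤ (1 - 1 / d) ^ d := by
  have hd' : (2 : ℝ) ≤ d := by exact_mod_cast hd
  have amgm := Real.geom_mean_le_arith_mean2_weighted (w₁ := 2 / d) (w₂ := 1 - 2 / d)
    (p₁ := 1 / 2) (p₂ := 1) (by positivity)
    (by rw [sub_nonneg, div_le_one (by linarith)]; exact hd')
    (by norm_num) (by norm_num) (by ring)
  rw [Real.one_rpow, mul_one] at amgm
  calc (1 / 4 : ℝ) = ((1 / 2 : ℝ) ^ (2 / (d : ℝ))) ^ d := by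
        rw [← Real.rpow_mul_natCast (by norm_num), div_mul_cancel₀ _ (by positivity)]
        norm_num
    _ ≤ (1 - 1 / d) ^ d := by
        gcongr
        linarith [show 2 / (d : ℝ) * (1 / 2) + (1 - 2 / d) * 1 = 1 - 1 / d by ring]

lemma four_rpow_neg_le_pow {d : ℕ} (hd : 2 ≤ d) {r G : ℝ} (hr : 0 ≤ r)
    (hG : (1 - 1 / (d : ℝ)) ^ r ≤ G) : (4 : ℝ) ^ (-r) ≤ G ^ d := by
  have ht : 0 ≤ 1 - 1 / (d : ℝ) := by
    rw [sub_nonneg, div_le_one (by positivity)]; exact_mod_cast (by omega : 1 ≤ d)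
  calc (4 : ℝ) ^ (-r) = (1 / 4) ^ r := by
        rw [Real.rpow_neg (by norm_num), ← Real.inv_rpow (by norm_num), one_div]
    _ ≤ ((1 - 1 / (d : ℝ)) ^ d) ^ r :=
        Real.rpow_le_rpow (by norm_num) (one_div_four_le_one_sub_one_div_pow hd) hr
    _ = ((1 - 1 / (d : ℝ)) ^ r) ^ d := by
        rw [← Real.rpow_natCast_mul ht, ← Real.rpow_mul_natCast ht, mul_comm]
    _ ≤ G ^ d := pow_le_pow_left₀ (Real.rpow_nonneg ht r) hG d

/-- Let `d ≥ 2`, `p ≤ 1/2`, `W` a nonnegative integer-valued random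
variable with finite mean and `X = max(W, 1)`.  With `AX = Bin(∑_{i=1}^d (X_i + Y_i), 1/d)`
(and `AW = Bin(∑_{i=1}^d (W_i + Y_i)⁺, 1/d)`), one has
`P(AX = 0) ≥ 4^{−E[W]−1}` and consequently `P(AW = 0) ≥ 4^{−E[W]−1}`. -/
theorem stmt8 (d : ℕ) (hd : 2 ≤ d) (p : ℝ) (hp0 : 0 ≤ p) (hp : p ≤ 1 / 2)
    (P : ℕ → ℝ) (hnonneg : ∀ n, 0 ≤ P n) (hsum : ∑' n, P n = 1)
    (hmean : Summable (fun n : ℕ => (n : ℝ) * P n)) :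
    (4 : ℝ) ^ (-(∑' k : ℕ, (k : ℝ) * P k) - 1)
        ≤ thinPMF (convList (List.replicate d (stepPMF p (maxOnePMF P)))) (1 / (d : ℝ)) 0
      ∧ (4 : ℝ) ^ (-(∑' k : ℕ, (k : ℝ) * P k) - 1)
        ≤ thinPMF (convList (List.replicate d (plusPMF p P))) (1 / (d : ℝ)) 0 := by
  have hP : HasSum P 1 := by
    by_cases hs : Summable P
    · exact hsum ▸ hs.hasSum
    · simp [tsum_eq_zero_of_not_summable hs] at hsum
  set μ := ∑' k : ℕ, (k : ℝ) * P k
  have hμ : 0 ≤ μ + 1 := by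
    linarith [hmean.hasSum.nonneg fun n => mul_nonneg n.cast_nonneg (hnonneg n)]
  set t : ℝ := 1 - 1 / (d : ℝ)
  have ht0 : 0 < t := sub_pos.2 ((div_lt_one (by positivity)).2 (by exact_mod_cast hd))
  have ht1 : t ≤ 1 := sub_le_self _ (by positivity)
  set G := ∑' n, maxOnePMF P n * t ^ n
  have hX : HasSum (fun n => maxOnePMF P n * t ^ n) G :=
    (summable_mul_pow_of_nonneg (maxOnePMF_nonneg hnonneg) (hasSum_maxOnePMF hP).summable
      ht0.le ht1).hasSum
  have hstep := hasSum_stepPMF_mul_pow p (by simp [maxOnePMF]) ht0.ne' hX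
  have hstep_ge : t ^ (μ + 1) ≤ (p * t + (1 - p) / t) * G :=
    (rpow_add_one_le_of_hasSum_maxOnePMF hnonneg hP hmean.hasSum ht0 ht1 hX).trans
      (le_mul_of_one_le_left (hX.nonneg fun n => mul_nonneg (maxOnePMF_nonneg hnonneg n)
        (pow_nonneg ht0.le n)) (one_le_mul_add_one_sub_div hp ht0 ht1))
  rw [show -μ - 1 = -(μ + 1) by ring]
  constructor
  · rw [thinPMF_convList_replicate_zero d hstep]
    exact four_rpow_neg_le_pow hd hμ hstep_ge
  · rw [thinPMF_convList_replicate_zero d (hasSum_plusPMF_mul_pow hstep)]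
    refine four_rpow_neg_le_pow hd hμ (hstep_ge.trans ?_)
    have : 0 ≤ p * P 0 * (t - t ^ 2) := mul_nonneg (mul_nonneg hp0 (hnonneg 0)) (by nlinarith)
    linarith
end

section
/- Let D be the sum of k i.i.d. random variables each equal to +1 with probability p and −1 with probability 1−p, where 1/4 < p < 1/2. Then E[D · 1{D ≥ 0}] ≤ C (1−2p)^{−2} k^{−1/2} (2√(p(1−p)))^k for an absolute constant C independent of k and p. -/
/-!
Write `x = √p`, `y = √(1 - p)` and `d = 2j - k ≥ 0`. Then
`p ^ j (1 - p) ^ (k - j) = (xy) ^ k (x / y) ^ d`, and every binomial coefficient satisfies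
`C(k, j) ≤ 2 ^ k / √k` (from `(3n + 1) C(2n, n) ^ 2 ≤ 16 ^ n`). Since `j ↦ d` is injective, the
sum is at most `(2xy) ^ k / √k · ∑ d (x / y) ^ d = (2xy) ^ k / √k · xy / (y - x) ^ 2`. Finally
`1 - 2p = (y - x)(y + x)` and `xy (x + y) ^ 2 ≤ 1` because `x ^ 2 + y ^ 2 = 1`, so one may take `C = 1`.
-/

open Finset

namespace Nat

theorem three_mul_add_one_mul_centralBinom_sq_le (n : ℕ) :
    (3 * n + 1) * centralBinom n ^ 2 ≤ 16 ^ n := by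
  induction n with
  | zero => simp
  | succ n ih =>
    have hrec : ((n + 1) * centralBinom (n + 1)) ^ 2 = (2 * (2 * n + 1) * centralBinom n) ^ 2 := by
      rw [succ_mul_centralBinom_succ]
    have hpoly : (3 * n + 4) * (2 * (2 * n + 1)) ^ 2 ≤ 16 * (n + 1) ^ 2 * (3 * n + 1) := by
      nlinarith
    refine Nat.le_of_mul_le_mul_left (?_ : (n + 1) ^ 2 * _ ≤ (n + 1) ^ 2 * _) (pow_pos n.succ_pos 2)
    calc (n + 1) ^ 2 * ((3 * (n + 1) + 1) * centralBinom (n + 1) ^ 2)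
        = (3 * n + 4) * ((n + 1) * centralBinom (n + 1)) ^ 2 := by ring
      _ = (3 * n + 4) * (2 * (2 * n + 1)) ^ 2 * centralBinom n ^ 2 := by rw [hrec]; ring
      _ ≤ 16 * (n + 1) ^ 2 * ((3 * n + 1) * centralBinom n ^ 2) := by
          rw [← mul_assoc]; gcongr
      _ ≤ 16 * (n + 1) ^ 2 * 16 ^ n := by gcongr
      _ = (n + 1) ^ 2 * 16 ^ (n + 1) := by ring

theorem mul_choose_sq_le_four_pow (k j : ℕ) : k * k.choose j ^ 2 ≤ 4 ^ k := by
  refine (Nat.mul_le_mul_left k (Nat.pow_le_pow_left (choose_le_middle j k) 2)).trans ?_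
  obtain ⟨n, rfl | rfl⟩ := even_or_odd' k
  · rw [Nat.mul_div_cancel_left n two_pos, ← centralBinom_eq_two_mul_choose, pow_mul]
    calc 2 * n * centralBinom n ^ 2 ≤ (3 * n + 1) * centralBinom n ^ 2 := by gcongr; omega
      _ ≤ (4 ^ 2) ^ n := three_mul_add_one_mul_centralBinom_sq_le n
  · -- the middle coefficient of an odd row is half the next central binomial coefficient
    have hhalf : centralBinom (n + 1) = 2 * (2 * n + 1).choose n := by
      rw [centralBinom_eq_two_mul_choose, show 2 * (n + 1) = 2 * n + 1 + 1 by ring,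
        choose_succ_succ, choose_symm_half]; ring
    have h := three_mul_add_one_mul_centralBinom_sq_le (n + 1)
    rw [hhalf, pow_succ 16] at h
    rw [show (2 * n + 1) / 2 = n by omega, pow_succ 4, pow_mul]
    norm_num
    nlinarith [Nat.zero_le ((2 * n + 1).choose n ^ 2)]

theorem choose_mul_sqrt_le_two_pow (k j : ℕ) : (k.choose j : ℝ) * √k ≤ 2 ^ k := by
  rw [← Real.sqrt_sq (by positivity : (0 : ℝ) ≤ 2 ^ k)]
  refine Real.le_sqrt_of_sq_le ?_
  rw [mul_pow, Real.sq_sqrt k.cast_nonneg, ← pow_mul, mul_comm k 2, pow_mul]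
  norm_num
  exact_mod_cast (mul_comm _ _ : _).trans_le (mul_choose_sq_le_four_pow k j)

end Nat

theorem pow_two_mul_mul_pow_two_mul_sub {K : Type*} [Field K] {x y : K} (hy : y ≠ 0)
    {j k : ℕ} (hjk : j ≤ k) (hkj : k ≤ 2 * j) :
    x ^ (2 * j) * y ^ (2 * (k - j)) = (x * y) ^ k * (x / y) ^ (2 * j - k) := by
  obtain ⟨m, rfl⟩ := Nat.exists_eq_add_of_le hjk
  obtain ⟨d, rfl⟩ := Nat.exists_eq_add_of_le (by omega : m ≤ j)
  rw [show 2 * (m + d) - (m + d + m) = d by omega, show m + d + m - (m + d) = m by omega, div_pow,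
    mul_pow]
  field_simp
  ring

theorem sum_range_ite_two_mul_sub_le_tsum {f : ℕ → ℝ} (hf : ∀ d, 0 ≤ f d) (hsum : Summable f)
    (k : ℕ) : ∑ j ∈ range (k + 1), (if k ≤ 2 * j then f (2 * j - k) else 0) ≤ ∑' d, f d := by
  rw [← sum_filter, ← sum_image fun i hi j hj hij => by
    simp only [coe_filter, Set.mem_ofPred_eq] at hi hj; omega]
  exact hsum.sum_le_tsum _ fun d _ => hf d

theorem two_mul_sub_mul_choose_mul_pow_le {x y : ℝ} (hx : 0 ≤ x) (hy : 0 < y) {k j : ℕ}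
    (hk : 0 < k) (hjk : j ≤ k) (hkj : k ≤ 2 * j) :
    (2 * (j : ℝ) - k) * k.choose j * (x ^ 2) ^ j * (y ^ 2) ^ (k - j)
      ≤ (2 * x * y) ^ k / √k * ((2 * j - k : ℕ) * (x / y) ^ (2 * j - k)) := by
  have hchoose : (k.choose j : ℝ) ≤ 2 ^ k / √k :=
    (le_div_iff₀ (Real.sqrt_pos.2 (by exact_mod_cast hk))).2 (Nat.choose_mul_sqrt_le_two_pow k j)
  calc (2 * (j : ℝ) - k) * k.choose j * (x ^ 2) ^ j * (y ^ 2) ^ (k - j)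
      = ((2 * j - k : ℕ) : ℝ) * (x / y) ^ (2 * j - k) * (x * y) ^ k * k.choose j := by
        rw [← pow_mul, ← pow_mul, mul_assoc _ (x ^ _), pow_two_mul_mul_pow_two_mul_sub hy.ne' hjk hkj,
          Nat.cast_sub hkj]
        push_cast
        ring
    _ ≤ ((2 * j - k : ℕ) : ℝ) * (x / y) ^ (2 * j - k) * (x * y) ^ k * (2 ^ k / √k) := by
        gcongr
    _ = (2 * x * y) ^ k / √k * ((2 * j - k : ℕ) * (x / y) ^ (2 * j - k)) := by
        rw [mul_assoc 2, mul_pow]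
        ring

theorem sum_range_two_mul_sub_mul_choose_mul_pow_le {x y : ℝ} (hx : 0 ≤ x) (hxy : x < y) {k : ℕ}
    (hk : 0 < k) :
    ∑ j ∈ range (k + 1),
        (if k ≤ 2 * j then (2 * (j : ℝ) - k) else 0) * k.choose j * (x ^ 2) ^ j * (y ^ 2) ^ (k - j)
      ≤ (2 * x * y) ^ k / √k * (x * y / (y - x) ^ 2) := by
  have hy : 0 < y := hx.trans_lt hxy
  have hr : ‖x / y‖ < 1 := by
    rw [Real.norm_eq_abs, abs_of_nonneg (by positivity), div_lt_one hy]; exact hxy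
  have hgeom := hasSum_coe_mul_geometric_of_norm_lt_one hr
  calc _ ≤ ∑ j ∈ range (k + 1), (2 * x * y) ^ k / √k *
          (if k ≤ 2 * j then ((2 * j - k : ℕ) : ℝ) * (x / y) ^ (2 * j - k) else 0) := by
        refine sum_le_sum fun j hj => ?_
        split_ifs with hkj
        · exact two_mul_sub_mul_choose_mul_pow_le hx hy hk (Nat.lt_succ_iff.1 (mem_range.1 hj)) hkj
        · simp
    _ = (2 * x * y) ^ k / √k * ∑ j ∈ range (k + 1),
          (if k ≤ 2 * j then ((2 * j - k : ℕ) : ℝ) * (x / y) ^ (2 * j - k) else 0) :=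
        (mul_sum _ _ _).symm
    _ ≤ (2 * x * y) ^ k / √k * ∑' d : ℕ, (d : ℝ) * (x / y) ^ d := by
        gcongr
        exact sum_range_ite_two_mul_sub_le_tsum (f := fun d : ℕ => (d : ℝ) * (x / y) ^ d)
          (fun d => by positivity) hgeom.summable k
    _ = (2 * x * y) ^ k / √k * (x * y / (y - x) ^ 2) := by
        rw [hgeom.tsum_eq]
        congr 1
        field_simp [(sub_pos.2 hxy).ne']

/-- Let `D = ∑_{i=1}^k ξ_i` with `ξ_i` i.i.d., `P(ξ_i = 1) = p`,
`P(ξ_i = −1) = 1 − p` and `1/4 < p < 1/2`.  Writing `D = 2j − k` on the event that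
exactly `j` of the `ξ_i` equal `+1`, one has
`E[D · 1{D ≥ 0}] ≤ C (1−2p)^{−2} k^{−1/2} (2√(p(1−p)))^k`
for an absolute constant `C` independent of `k` and `p`. -/
theorem stmt9 :
    ∃ C : ℝ, 0 < C ∧ ∀ (k : ℕ), 1 ≤ k → ∀ (p : ℝ), 1 / 4 < p → p < 1 / 2 →
      (∑ j ∈ Finset.range (k + 1),
          (if k ≤ 2 * j then (2 * (j : ℝ) - k) else 0) *
            (Nat.choose k j : ℝ) * p ^ j * (1 - p) ^ (k - j))
        ≤ C * ((1 - 2 * p) ^ 2)⁻¹ * (Real.sqrt k)⁻¹ *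
            (2 * Real.sqrt (p * (1 - p))) ^ k := by
  refine ⟨1, one_pos, fun k hk p hp hp' => ?_⟩
  set x := √p
  set y := √(1 - p)
  have hx : x ^ 2 = p := Real.sq_sqrt (by linarith)
  have hy : y ^ 2 = 1 - p := Real.sq_sqrt (by linarith)
  have hxy : x < y := Real.sqrt_lt_sqrt (by linarith) (by linarith)
  have hsqrt : √(p * (1 - p)) = x * y := Real.sqrt_mul (by linarith) _
  have hdiff : 1 - 2 * p = (y - x) * (y + x) := by linear_combination hx - hy
  have hgap : x * y / (y - x) ^ 2 ≤ ((1 - 2 * p) ^ 2)⁻¹ := by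
    have hx0 : 0 ≤ x := Real.sqrt_nonneg p
    rw [hdiff, mul_pow, mul_inv, div_eq_mul_inv, mul_comm (x * y)]
    gcongr
    rw [← one_div, le_div_iff₀ (by positivity)]
    nlinarith [sq_nonneg (x - y), mul_nonneg hx0 (hx0.trans hxy.le)]
  calc _ = ∑ j ∈ range (k + 1), (if k ≤ 2 * j then (2 * (j : ℝ) - k) else 0) * k.choose j *
          (x ^ 2) ^ j * (y ^ 2) ^ (k - j) := by rw [hx, hy]
    _ ≤ (2 * x * y) ^ k / √k * (x * y / (y - x) ^ 2) :=
        sum_range_two_mul_sub_mul_choose_mul_pow_le (Real.sqrt_nonneg p) hxy hk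
    _ ≤ (2 * x * y) ^ k / √k * ((1 - 2 * p) ^ 2)⁻¹ := by gcongr
    _ = _ := by rw [hsqrt]; ring
end

section
/- Let T_y be the first hitting time of y ∈ ℤ for a rate-1 continuous-time simple random walk on ℤ started at the origin. For any t > 0, integer a > 0, and integer x with 3√t ≤ x ≤ 2t, P(T_x < T_{−a} and T_x ≤ t) ≤ (2a/(a+x)) e^{−x²/(12t)}. -/
/-!
Let `S` be the `±1` skeleton of the walk and `N` the Poisson(`t`) number of its jumps by
time `t`. For `λ > 0`, `h(m) = sinh(λ(m + a))` vanishes at `-a` and satisfies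
`h(m + 1) + h(m - 1) = 2 cosh λ · h(m)`, so optional stopping (done here by counting paths)
bounds the number `c_j` of `j`-step paths that first leave `(-a, x)` at `x`:
`∑_j c_j (2 cosh λ)^(-j) ≤ h(0) / h(x)`. By independence the probability in question is at
most `∑_j c_j 2^(-j) P(N ≥ j)`, and the Chernoff bound
`P(N ≥ j) ≤ e^(t (cosh λ - 1)) (cosh λ)^(-j)` turns this into
`e^(t (cosh λ - 1)) sinh(λa) / sinh(λ(a + x))`. Finally take `λ = 2x / (5t)`: the inequality
`(u + s) sinh u sinh s ≤ u s sinh(u + s)` (a consequence of `tanh y ≤ y`) splits off the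
factor `a / (a + x)`, and `cosh λ - 1 ≤ λ²/2 + λ⁴/4` together with
`s / sinh s ≤ 2 e^(-s/2)` gives the Gaussian factor.
-/

open MeasureTheory ProbabilityTheory

/-- Index type for the joint family consisting of the Poisson number of jumps (`none`)
and the i.i.d. steps (`some i`). -/
def JT : Option ℕ → Type
  | none => ℕ
  | some _ => ℤ

instance JTmeas : ∀ o, MeasurableSpace (JT o)
  | none => (inferInstance : MeasurableSpace ℕ)
  | some _ => (inferInstance : MeasurableSpace ℤ)

/-- The joint family of random variables: the jump count and the steps. -/
def jointFam {Ω : Type*} (N : Ω → ℕ) (ξ : ℕ → Ω → ℤ) : (o : Option ℕ) → Ω → JT o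
  | none => N
  | some j => ξ j

open Finset Real

namespace Real

lemma sinh_le_mul_cosh {y : ℝ} (hy : 0 ≤ y) : sinh y ≤ y * cosh y := by
  have hmono : MonotoneOn (fun z => z * cosh z - sinh z) (Set.Ici 0) := by
    refine monotoneOn_of_hasDerivWithinAt_nonneg (f' := fun z => z * sinh z) (convex_Ici 0)
      (by fun_prop) (fun z _ => ?_) fun z hz => ?_
    · have h := ((hasDerivAt_id' z).mul (hasDerivAt_cosh z)).sub (hasDerivAt_sinh z)
      simp only [one_mul, add_sub_cancel_left] at h
      exact h.hasDerivWithinAt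
    · rw [interior_Ici] at hz
      exact mul_nonneg (le_of_lt hz) (sinh_nonneg_iff.2 (le_of_lt hz))
  simpa using hmono Set.self_mem_Ici hy hy

lemma add_mul_sinh_mul_sinh_le {u s : ℝ} (hu : 0 ≤ u) (hs : 0 ≤ s) :
    (u + s) * (sinh u * sinh s) ≤ u * s * sinh (u + s) := by
  have hu' := mul_nonneg (mul_nonneg hu (sinh_nonneg_iff.2 hu))
    (sub_nonneg.2 (sinh_le_mul_cosh hs))
  have hs' := mul_nonneg (mul_nonneg hs (sinh_nonneg_iff.2 hs))
    (sub_nonneg.2 (sinh_le_mul_cosh hu))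
  rw [sinh_add]
  linarith

lemma sinh_mul_div_sinh_mul_add_le {l a x : ℝ} (hl : 0 < l) (ha : 0 < a) (hx : 0 < x) :
    sinh (l * a) / sinh (l * (a + x)) ≤ a / (a + x) * (l * x / sinh (l * x)) := by
  have hsinh_x : 0 < sinh (l * x) := sinh_pos_iff.2 (by positivity)
  have hsinh_ax : 0 < sinh (l * (a + x)) := sinh_pos_iff.2 (by positivity)
  have key := add_mul_sinh_mul_sinh_le (mul_pos hl ha).le (mul_pos hl hx).le
  rw [← mul_add] at key
  rw [div_le_iff₀ hsinh_ax]
  field_simp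
  nlinarith

lemma cosh_sub_one_le {x : ℝ} (hx : x ^ 2 ≤ 2) : cosh x - 1 ≤ x ^ 2 / 2 + x ^ 4 / 4 := by
  have hz : |x ^ 2 / 2| ≤ 1 := by rw [abs_le]; constructor <;> nlinarith [sq_nonneg x]
  have := (abs_le.1 (abs_exp_sub_one_sub_id_le hz)).2
  have := cosh_le_exp_half_sq x
  nlinarith

lemma div_sinh_le {s : ℝ} (hs : 2 ≤ s) : s / sinh s ≤ 2 * exp (-(s / 2)) := by
  set w := exp (s / 2) with hw
  have hw_ge := quadratic_le_exp_of_nonneg (x := s / 2) (by linarith)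
  have hw_pos : 0 < w := exp_pos _
  have hexp : exp s = w ^ 2 := by rw [hw, ← exp_nat_mul]; ring_nf
  have hexp_neg : exp (-s) ≤ 1 := exp_le_one_iff.2 (by linarith)
  have hsinh : 0 < sinh s := sinh_pos_iff.2 (by linarith)
  rw [exp_neg, ← hw, div_le_iff₀ hsinh, sinh_eq, hexp]
  field_simp
  nlinarith [mul_pos hw_pos hw_pos]

end Real

lemma exp_cosh_mul_sinh_div_sinh_le {t a x : ℝ} (ht : 0 < t) (ha : 0 < a) (hx : 0 < x)
    (hx9 : 9 * t ≤ x ^ 2) (hx2 : x ≤ 2 * t) :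
    exp (t * (cosh (2 * x / (5 * t)) - 1)) *
        (sinh (2 * x / (5 * t) * a) / sinh (2 * x / (5 * t) * (a + x)))
      ≤ 2 * a / (a + x) * exp (-x ^ 2 / (12 * t)) := by
  set l := 2 * x / (5 * t) with hl
  have hl_pos : 0 < l := by positivity
  have hl_sq : l ^ 2 ≤ 16 / 25 := by
    rw [hl, div_pow, div_le_iff₀ (by positivity)]
    nlinarith
  have hcosh : t * (cosh l - 1) ≤ 66 / 625 * (x ^ 2 / t) := by
    have h := cosh_sub_one_le (by linarith : l ^ 2 ≤ 2)
    have htl : t * l ^ 2 = 4 / 25 * (x ^ 2 / t) := by rw [hl]; field_simp; ring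
    calc t * (cosh l - 1) ≤ t * l ^ 2 * (1 / 2 + l ^ 2 / 4) := by nlinarith
      _ ≤ t * l ^ 2 * (1 / 2 + 4 / 25) := by
        gcongr t * l ^ 2 * ?_
        linarith
      _ = 66 / 625 * (x ^ 2 / t) := by rw [htl]; ring
  have hs : l * x = 2 / 5 * (x ^ 2 / t) := by rw [hl]; field_simp
  have hy : 9 ≤ x ^ 2 / t := by rw [le_div_iff₀ ht]; linarith
  have hdiv := div_sinh_le (s := l * x) (by rw [hs]; linarith)
  calc exp (t * (cosh l - 1)) * (sinh (l * a) / sinh (l * (a + x)))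
      ≤ exp (66 / 625 * (x ^ 2 / t)) * (a / (a + x) * (2 * exp (-(l * x / 2)))) := by
        gcongr
        exact (sinh_mul_div_sinh_mul_add_le hl_pos ha hx).trans (by gcongr)
    _ = 2 * a / (a + x) * exp (66 / 625 * (x ^ 2 / t) - l * x / 2) := by
        rw [sub_eq_add_neg, exp_add]; ring
    _ ≤ 2 * a / (a + x) * exp (-x ^ 2 / (12 * t)) := by
        gcongr
        have : -x ^ 2 / (12 * t) = -(x ^ 2 / t) / 12 := by ring
        rw [this, hs]
        linarith

namespace LatticeWalk

def stepOf (b : Bool) : ℤ := if b then 1 else -1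

def walk (m : ℤ) (s : ℕ → ℤ) (n : ℕ) : ℤ := m + ∑ k ∈ range n, s k

def FirstExitAt (lo hi m : ℤ) (s : ℕ → ℤ) (j : ℕ) : Prop :=
  walk m s j = hi ∧ ∀ i < j, lo < walk m s i ∧ walk m s i < hi

instance (lo hi m : ℤ) (s : ℕ → ℤ) (j : ℕ) : Decidable (FirstExitAt lo hi m s j) :=
  inferInstanceAs (Decidable (_ ∧ _))

def stepSeq {j : ℕ} (e : Fin j → Bool) (k : ℕ) : ℤ :=
  if h : k < j then stepOf (e ⟨k, h⟩) else 0

def exitPaths (lo hi m : ℤ) (j : ℕ) : Finset (Fin j → Bool) :=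
  univ.filter fun e => FirstExitAt lo hi m (stepSeq e) j

@[simp] lemma walk_zero (m : ℤ) (s : ℕ → ℤ) : walk m s 0 = m := by simp [walk]

lemma walk_succ (m : ℤ) (s : ℕ → ℤ) (n : ℕ) : walk m s (n + 1) = walk m s n + s n := by
  simp [walk, sum_range_succ, add_assoc]

lemma walk_succ' (m : ℤ) (s : ℕ → ℤ) (n : ℕ) :
    walk m s (n + 1) = walk (m + s 0) (fun k => s (k + 1)) n := by
  simp only [walk, sum_range_succ']
  ring

lemma walk_congr {m : ℤ} {s s' : ℕ → ℤ} {n : ℕ} (h : ∀ k < n, s k = s' k) :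
    walk m s n = walk m s' n := by
  simp only [walk]
  congr 1
  exact sum_congr rfl fun k hk => h k (mem_range.1 hk)

lemma firstExitAt_congr {lo hi m : ℤ} {s s' : ℕ → ℤ} {j : ℕ} (h : ∀ k < j, s k = s' k) :
    FirstExitAt lo hi m s j ↔ FirstExitAt lo hi m s' j := by
  have hw : ∀ i ≤ j, walk m s i = walk m s' i := fun i hi =>
    walk_congr fun k hk => h k (lt_of_lt_of_le hk hi)
  unfold FirstExitAt
  rw [hw j le_rfl]
  exact and_congr_right' (forall₂_congr fun i hi => by rw [hw i hi.le])

lemma firstExitAt_zero {lo hi m : ℤ} {s : ℕ → ℤ} : FirstExitAt lo hi m s 0 ↔ m = hi := by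
  simp [FirstExitAt]

lemma firstExitAt_succ {lo hi m : ℤ} {s : ℕ → ℤ} {j : ℕ} :
    FirstExitAt lo hi m s (j + 1) ↔
      (lo < m ∧ m < hi) ∧ FirstExitAt lo hi (m + s 0) (fun k => s (k + 1)) j := by
  simp only [FirstExitAt, Nat.forall_lt_succ_left, walk_zero, walk_succ']
  tauto

lemma stepSeq_cons_zero {j : ℕ} (b : Bool) (e : Fin j → Bool) :
    stepSeq (Fin.cons b e : Fin (j + 1) → Bool) 0 = stepOf b := by
  simp [stepSeq]

lemma stepSeq_cons_succ {j : ℕ} (b : Bool) (e : Fin j → Bool) :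
    (fun k => stepSeq (Fin.cons b e : Fin (j + 1) → Bool) (k + 1)) = stepSeq e := by
  funext k
  by_cases hk : k < j
  · simp only [stepSeq, hk, Nat.succ_lt_succ_iff, dite_true]
    exact congrArg stepOf (Fin.cons_succ (α := fun _ => Bool) b e ⟨k, hk⟩)
  · simp [stepSeq, hk]

lemma stepSeq_decide_eq {s : ℕ → ℤ} (hs : ∀ k, s k = 1 ∨ s k = -1) {j k : ℕ}
    (hk : k < j) :
    stepSeq (fun i : Fin j => decide (s i = 1)) k = s k := by
  rcases hs k with h | h <;> simp [stepSeq, stepOf, hk, h]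

lemma card_exitPaths_zero (lo hi m : ℤ) :
    #(exitPaths lo hi m 0) = if m = hi then 1 else 0 := by
  split_ifs with h <;> simp [exitPaths, firstExitAt_zero, h]

lemma card_exitPaths_succ (lo hi m : ℤ) (j : ℕ) :
    #(exitPaths lo hi m (j + 1)) =
      if lo < m ∧ m < hi then #(exitPaths lo hi (m + 1) j) + #(exitPaths lo hi (m - 1) j)
      else 0 := by
  simp only [exitPaths, card_filter]
  rw [← Fintype.sum_bijective
    (fun p : Bool × (Fin j → Bool) => (Fin.cons p.1 p.2 : Fin (j + 1) → Bool))
    (Fin.consEquiv fun _ => Bool).bijective _ _ fun _ => rfl, Fintype.sum_prod_type,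
    Fintype.sum_bool]
  simp only [firstExitAt_succ, stepSeq_cons_zero, stepSeq_cons_succ, stepOf, if_true,
    Bool.false_eq_true, if_false]
  by_cases h : lo < m ∧ m < hi <;> simp [h, sub_eq_add_neg]

lemma exists_firstExitAt_le {lo hi m : ℤ} {s : ℕ → ℤ} (hs : ∀ k, |s k| ≤ 1)
    (hlo : lo < m) (hhi : m ≤ hi) {j : ℕ} (hj : walk m s j = hi)
    (havoid : ∀ i < j, walk m s i ≠ lo) :
    ∃ j₀ ≤ j, FirstExitAt lo hi m s j₀ := by
  classical
  have hex : ∃ n, walk m s n = hi ∧ n ≤ j := ⟨j, hj, le_rfl⟩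
  obtain ⟨hj₀, hj₀j⟩ := Nat.find_spec hex
  refine ⟨Nat.find hex, hj₀j, hj₀, fun i hij => ?_⟩
  induction i with
  | zero => exact ⟨by simpa using hlo, lt_of_le_of_ne (by simpa using hhi)
      (by simpa using Nat.find_min hex hij)⟩
  | succ i ih =>
    have hne_hi : walk m s (i + 1) ≠ hi := fun h => Nat.find_min hex hij ⟨h, by omega⟩
    have hne_lo := havoid (i + 1) (by omega)
    have hstep := abs_le.1 (hs i)
    have := ih (by omega)
    rw [walk_succ] at hne_hi hne_lo ⊢
    omega

-- Optional stopping, in counting form, for `h(S_n) / r^n` with the walk killed on leaving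
-- `(lo, hi)`.
lemma sum_card_exitPaths_div_pow_le {lo hi : ℤ} {r : ℝ} (hr : 0 < r) {h : ℤ → ℝ}
    (h_nonneg : ∀ m, lo ≤ m → m ≤ hi → 0 ≤ h m) (h_hi : 1 ≤ h hi)
    (h_super : ∀ m, lo < m → m < hi → h (m + 1) + h (m - 1) ≤ r * h m) (n : ℕ) :
    ∀ m, lo ≤ m → m ≤ hi →
      ∑ j ∈ range n, (#(exitPaths lo hi m j) : ℝ) / r ^ j ≤ h m := by
  induction n with
  | zero => simpa using h_nonneg
  | succ n ih =>
    intro m hlo hhi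
    rw [sum_range_succ']
    simp only [card_exitPaths_succ, card_exitPaths_zero, pow_succ, pow_zero]
    by_cases hint : lo < m ∧ m < hi
    · have hup := ih (m + 1) (by omega) (by omega)
      have hdown := ih (m - 1) (by omega) (by omega)
      simp only [hint, and_self, if_true, hint.2.ne, if_false, Nat.cast_add, Nat.cast_zero,
        zero_div, add_zero]
      calc ∑ j ∈ range n, ((#(exitPaths lo hi (m + 1) j) : ℝ) + #(exitPaths lo hi (m - 1) j))
              / (r ^ j * r)
          = (∑ j ∈ range n, (#(exitPaths lo hi (m + 1) j) : ℝ) / r ^ j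
              + ∑ j ∈ range n, (#(exitPaths lo hi (m - 1) j) : ℝ) / r ^ j) / r := by
            rw [← sum_add_distrib, sum_div]
            refine sum_congr rfl fun j _ => ?_
            field_simp
        _ ≤ (h (m + 1) + h (m - 1)) / r := by gcongr
        _ ≤ h m := by rw [div_le_iff₀ hr, mul_comm]; exact h_super m hint.1 hint.2
    · simp only [hint, if_false, Nat.cast_zero, zero_div, sum_const_zero, zero_add]
      split_ifs with hm
      · simpa [hm] using h_hi
      · simpa using h_nonneg m hlo hhi

lemma tsum_card_exitPaths_le {lo hi m : ℤ} (hlh : lo < hi) (hlo : lo ≤ m) (hhi : m ≤ hi)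
    {l : ℝ} (hl : 0 < l) :
    ∑' j, ENNReal.ofReal (#(exitPaths lo hi m j) / (2 * cosh l) ^ j)
      ≤ ENNReal.ofReal (sinh (l * (m - lo)) / sinh (l * (hi - lo))) := by
  have hD : 0 < sinh (l * (hi - lo)) :=
    sinh_pos_iff.2 (mul_pos hl (by exact_mod_cast sub_pos.2 hlh))
  refine ENNReal.tsum_le_of_sum_range_le fun n => ?_
  rw [← ENNReal.ofReal_sum_of_nonneg fun j _ => by positivity]
  refine ENNReal.ofReal_le_ofReal (sum_card_exitPaths_div_pow_le (r := 2 * cosh l)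
    (h := fun k => sinh (l * (k - lo)) / sinh (l * (hi - lo))) (by positivity)
    (fun k hk _ => ?_) ?_ (fun k _ _ => ?_) n m hlo hhi)
  · exact div_nonneg
      (sinh_nonneg_iff.2 (mul_nonneg hl.le (by exact_mod_cast sub_nonneg.2 hk))) hD.le
  · rw [div_self hD.ne']
  · have hsinh : sinh (l * ((k + 1 : ℤ) - lo)) + sinh (l * ((k - 1 : ℤ) - lo))
        = 2 * cosh l * sinh (l * (k - lo)) := by
      push_cast
      rw [show l * (k + 1 - lo) = l * (k - lo) + l by ring,
        show l * (k - 1 - lo) = l * (k - lo) - l by ring, sinh_add, sinh_sub]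
      ring
    rw [← add_div, hsinh, mul_div_assoc]

end LatticeWalk

open LatticeWalk

section Probability

variable {Ω : Type*} [MeasurableSpace Ω] {μ : Measure Ω}

lemma measure_cylinder_inter_eq_prod {ξ : ℕ → Ω → ℤ} {N : Ω → ℕ}
    (hindep : iIndepFun (jointFam N ξ) μ) (v : ℕ → ℤ) (j : ℕ) :
    μ ({ω | ∀ i < j, ξ i ω = v i} ∩ {ω | j ≤ N ω})
      = (∏ i ∈ range j, μ {ω | ξ i ω = v i}) * μ {ω | j ≤ N ω} := by
  let sets : ∀ o, Set (JT o) := fun o =>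
    Option.rec (motive := fun o => Set (JT o)) (Set.Ici j : Set ℕ) (fun i => ({v i} : Set ℤ)) o
  have h := hindep.measure_inter_preimage_eq_mul
    (insert none ((range j).map Function.Embedding.some)) (sets := sets)
    (fun o _ => by cases o <;> trivial)
  rw [prod_insert (by simp), prod_map, mul_comm] at h
  convert h using 2 <;> try rfl
  ext ω
  simp only [Set.mem_inter_iff, Set.mem_ofPred_eq, and_comm, mem_insert, mem_map, mem_range,
    Function.Embedding.some_apply, jointFam, Set.iInter_iInter_eq_or_left, Set.iInter_exists,
    Set.biInter_and', Set.iInter_iInter_eq_right, Set.mem_iInter, sets]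
  exact Iff.rfl

lemma poisson_tail_le {N : Ω → ℕ} {t : ℝ} (ht : 0 ≤ t)
    (hN : ∀ n : ℕ, μ {ω | N ω = n} = ENNReal.ofReal (exp (-t) * t ^ n / (n.factorial : ℝ)))
    {r : ℝ} (hr : 1 ≤ r) (j : ℕ) :
    μ {ω | j ≤ N ω} ≤ ENNReal.ofReal (exp (t * (r - 1)) / r ^ j) := by
  have hr0 : 0 < r := by linarith
  set c := exp (-t) / r ^ j
  have hsum := (NormedSpace.expSeries_div_hasSum_exp (t * r)).mul_left c
  rw [← exp_eq_exp_ℝ] at hsum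
  calc μ {ω | j ≤ N ω} = μ (⋃ n, {ω | N ω = j + n}) := by
        congr 1
        ext ω
        simp only [Set.mem_ofPred_eq, Set.mem_iUnion]
        exact ⟨fun h => ⟨N ω - j, by omega⟩, fun ⟨n, hn⟩ => by omega⟩
    _ ≤ ∑' n, μ {ω | N ω = j + n} := measure_iUnion_le _
    _ ≤ ∑' n, ENNReal.ofReal (c * ((t * r) ^ (j + n) / (j + n).factorial)) := by
        refine ENNReal.tsum_le_tsum fun n => ?_
        rw [hN]
        refine ENNReal.ofReal_le_ofReal ?_
        have : c * ((t * r) ^ (j + n) / (j + n).factorial)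
            = exp (-t) * t ^ (j + n) * r ^ n / (j + n).factorial := by
          simp only [c, mul_pow, pow_add r]
          field_simp
        rw [this]
        exact div_le_div_of_nonneg_right
          (le_mul_of_one_le_right (by positivity) (one_le_pow₀ hr)) (by positivity)
    _ ≤ ∑' k, ENNReal.ofReal (c * ((t * r) ^ k / k.factorial)) :=
        ENNReal.tsum_comp_le_tsum_of_injective (add_right_injective j) _
    _ = ENNReal.ofReal (exp (t * (r - 1)) / r ^ j) := by
        rw [← ENNReal.ofReal_tsum_of_nonneg (fun k => by positivity) hsum.summable,
          hsum.tsum_eq]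
        congr 1
        simp only [c, div_mul_eq_mul_div, ← exp_add]
        ring_nf

lemma ae_eq_one_or_eq_neg_one [IsProbabilityMeasure μ] {ξ : ℕ → Ω → ℤ}
    (hmξ : ∀ i, Measurable (ξ i))
    (hξ1 : ∀ i, μ {ω | ξ i ω = 1} = ENNReal.ofReal (1 / 2))
    (hξ2 : ∀ i, μ {ω | ξ i ω = -1} = ENNReal.ofReal (1 / 2)) :
    ∀ᵐ ω ∂μ, ∀ i, ξ i ω = 1 ∨ ξ i ω = -1 := by
  refine ae_all_iff.2 fun i => ?_
  have hmeas : ∀ z : ℤ, MeasurableSet {ω | ξ i ω = z} := fun z =>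
    hmξ i (measurableSet_singleton z)
  have hdisj : Disjoint {ω | ξ i ω = 1} {ω | ξ i ω = -1} :=
    Set.disjoint_left.2 fun ω h1 h2 => by simp_all
  have hunion : μ ({ω | ξ i ω = 1} ∪ {ω | ξ i ω = -1}) = 1 := by
    rw [measure_union hdisj (hmeas _), hξ1, hξ2,
      ← ENNReal.ofReal_add (by norm_num) (by norm_num)]
    norm_num
  exact (prob_compl_eq_zero_iff ((hmeas _).union (hmeas _))).2 hunion

lemma measure_stepSeq_cylinder_inter {ξ : ℕ → Ω → ℤ} {N : Ω → ℕ}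
    (hindep : iIndepFun (jointFam N ξ) μ)
    (hξ1 : ∀ i, μ {ω | ξ i ω = 1} = ENNReal.ofReal (1 / 2))
    (hξ2 : ∀ i, μ {ω | ξ i ω = -1} = ENNReal.ofReal (1 / 2)) {j : ℕ} (e : Fin j → Bool) :
    μ ({ω | ∀ i < j, ξ i ω = stepSeq e i} ∩ {ω | j ≤ N ω})
      = ENNReal.ofReal (1 / 2) ^ j * μ {ω | j ≤ N ω} := by
  rw [measure_cylinder_inter_eq_prod hindep]
  congr 1
  rw [prod_congr rfl (g := fun _ => ENNReal.ofReal (1 / 2)) fun i hi => ?_, prod_const,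
    card_range]
  simp only [stepSeq, mem_range.1 hi, dite_true, stepOf]
  split_ifs
  exacts [hξ1 i, hξ2 i]

lemma measure_reach_le_tsum_card_exitPaths [IsProbabilityMeasure μ] {ξ : ℕ → Ω → ℤ}
    {N : Ω → ℕ} (hmξ : ∀ i, Measurable (ξ i)) (hindep : iIndepFun (jointFam N ξ) μ)
    (hξ1 : ∀ i, μ {ω | ξ i ω = 1} = ENNReal.ofReal (1 / 2))
    (hξ2 : ∀ i, μ {ω | ξ i ω = -1} = ENNReal.ofReal (1 / 2)) {lo hi : ℤ} (hlo : lo < 0)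
    (hhi : 0 ≤ hi) :
    μ {ω | ∃ j ≤ N ω, (∑ i ∈ range j, ξ i ω) = hi
        ∧ ∀ i < j, (∑ i' ∈ range i, ξ i' ω) ≠ lo}
      ≤ ∑' j, (#(exitPaths lo hi 0 j) : ENNReal) * ENNReal.ofReal (1 / 2) ^ j
          * μ {ω | j ≤ N ω} := by
  -- Almost surely all steps are `±1`, so a path reaching `hi` before `lo` first leaves `(lo, hi)`
  -- at `hi`, and the event is covered by the cylinders of exit paths.
  calc _ ≤ μ (⋃ j, ⋃ e ∈ exitPaths lo hi 0 j,
          {ω | ∀ i < j, ξ i ω = stepSeq e i} ∩ {ω | j ≤ N ω}) := by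
        refine measure_mono_ae ((ae_eq_one_or_eq_neg_one hmξ hξ1 hξ2).mono fun ω hω hA => ?_)
        obtain ⟨j, hjN, hj, havoid⟩ := hA
        have hwalk : ∀ n, walk 0 (fun k => ξ k ω) n = ∑ i ∈ range n, ξ i ω :=
          fun n => zero_add _
        obtain ⟨j₀, hj₀, hexit⟩ := exists_firstExitAt_le (s := fun k => ξ k ω)
          (fun k => by rcases hω k with h | h <;> simp [h]) hlo hhi (by rw [hwalk]; exact hj)
          (fun i hi => by rw [hwalk]; exact havoid i hi)
        have hseq : ∀ k < j₀, stepSeq (fun i : Fin j₀ => decide (ξ i ω = 1)) k = ξ k ω :=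
          fun k hk => stepSeq_decide_eq hω hk
        refine Set.mem_iUnion.2 ⟨j₀, Set.mem_iUnion₂.2 ⟨_, ?_, fun k hk => (hseq k hk).symm,
          hj₀.trans hjN⟩⟩
        exact mem_filter.2 ⟨mem_univ _, (firstExitAt_congr hseq).2 hexit⟩
    _ ≤ ∑' j, μ (⋃ e ∈ exitPaths lo hi 0 j,
          {ω | ∀ i < j, ξ i ω = stepSeq e i} ∩ {ω | j ≤ N ω}) := measure_iUnion_le _
    _ ≤ ∑' j, ∑ e ∈ exitPaths lo hi 0 j,
          μ ({ω | ∀ i < j, ξ i ω = stepSeq e i} ∩ {ω | j ≤ N ω}) :=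
        ENNReal.tsum_le_tsum fun j => measure_biUnion_finset_le _ _
    _ = _ := by
        simp_rw [measure_stepSeq_cylinder_inter hindep hξ1 hξ2, sum_const, nsmul_eq_mul,
          mul_assoc]

lemma measure_reach_le_exp_mul_sinh_div_sinh [IsProbabilityMeasure μ] {ξ : ℕ → Ω → ℤ}
    {N : Ω → ℕ} (hmξ : ∀ i, Measurable (ξ i)) (hindep : iIndepFun (jointFam N ξ) μ)
    (hξ1 : ∀ i, μ {ω | ξ i ω = 1} = ENNReal.ofReal (1 / 2))
    (hξ2 : ∀ i, μ {ω | ξ i ω = -1} = ENNReal.ofReal (1 / 2)) {t : ℝ} (ht : 0 ≤ t)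
    (hN : ∀ n : ℕ, μ {ω | N ω = n} = ENNReal.ofReal (exp (-t) * t ^ n / (n.factorial : ℝ)))
    {a x : ℕ} (ha : 0 < a) {l : ℝ} (hl : 0 < l) :
    μ {ω | ∃ j ≤ N ω, (∑ i ∈ range j, ξ i ω) = (x : ℤ)
        ∧ ∀ i < j, (∑ i' ∈ range i, ξ i' ω) ≠ -(a : ℤ)}
      ≤ ENNReal.ofReal (exp (t * (cosh l - 1)) * (sinh (l * a) / sinh (l * (a + x)))) := by
  have hgen := tsum_card_exitPaths_le (lo := -a) (hi := x) (m := 0) (by omega) (by omega)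
    (by omega) hl
  push_cast at hgen
  simp only [sub_neg_eq_add, zero_add] at hgen
  rw [add_comm (x : ℝ)] at hgen
  calc _ ≤ ∑' j, (#(exitPaths (-a) x 0 j) : ENNReal) * ENNReal.ofReal (1 / 2) ^ j
          * μ {ω | j ≤ N ω} :=
        measure_reach_le_tsum_card_exitPaths hmξ hindep hξ1 hξ2 (by omega) (by omega)
    _ ≤ ∑' j, (#(exitPaths (-a) x 0 j) : ENNReal) * ENNReal.ofReal (1 / 2) ^ j
          * ENNReal.ofReal (exp (t * (cosh l - 1)) / cosh l ^ j) :=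
        ENNReal.tsum_le_tsum fun j => by gcongr; exact poisson_tail_le ht hN (one_le_cosh l) j
    _ = ENNReal.ofReal (exp (t * (cosh l - 1)))
          * ∑' j, ENNReal.ofReal (#(exitPaths (-a) x 0 j) / (2 * cosh l) ^ j) := by
        rw [← ENNReal.tsum_mul_left]
        refine tsum_congr fun j => ?_
        rw [← ENNReal.ofReal_natCast, ← ENNReal.ofReal_pow (by norm_num),
          ← ENNReal.ofReal_mul, ← ENNReal.ofReal_mul, ← ENNReal.ofReal_mul (exp_pos _).le]
          <;> try positivity
        congr 1
        field_simp
        rw [mul_assoc, ← mul_pow]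
        ring
    _ ≤ ENNReal.ofReal (exp (t * (cosh l - 1)))
          * ENNReal.ofReal (sinh (l * a) / sinh (l * (a + x))) := by gcongr
    _ = _ := (ENNReal.ofReal_mul (exp_pos _).le).symm

end Probability

/-- The walk is realized by i.i.d. fair `±1` steps `ξ` and an independent Poisson(`t`) number `N`
of jumps by time `t`, so `{T_x < T_{-a}, T_x ≤ t}` is the event that the skeleton reaches `x`
within `N` steps without previously visiting `-a`. -/
theorem stmt14_general {Ω : Type*} [MeasurableSpace Ω] (μ : Measure Ω) [IsProbabilityMeasure μ]
    (t : ℝ) (ht : 0 < t) (a x : ℕ) (ha : 0 < a)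
    (hx1 : 3 * Real.sqrt t ≤ (x : ℝ)) (hx2 : (x : ℝ) ≤ 2 * t)
    (ξ : ℕ → Ω → ℤ) (N : Ω → ℕ)
    (hmξ : ∀ i, Measurable (ξ i))
    (hindep : iIndepFun (jointFam N ξ) μ)
    (hξ1 : ∀ i, μ {ω | ξ i ω = 1} = ENNReal.ofReal (1 / 2))
    (hξ2 : ∀ i, μ {ω | ξ i ω = -1} = ENNReal.ofReal (1 / 2))
    (hN : ∀ n : ℕ, μ {ω | N ω = n}
        = ENNReal.ofReal (Real.exp (-t) * t ^ n / (n.factorial : ℝ))) :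
    μ {ω | ∃ j ≤ N ω, (∑ i ∈ Finset.range j, ξ i ω) = (x : ℤ)
            ∧ ∀ i < j, (∑ i' ∈ Finset.range i, ξ i' ω) ≠ -(a : ℤ)}
      ≤ ENNReal.ofReal (2 * a / (a + x) * Real.exp (-(x : ℝ) ^ 2 / (12 * t))) := by
  have hsqrt := Real.sqrt_pos.2 ht
  have hx : (0 : ℝ) < x := by linarith
  have hx9 : 9 * t ≤ (x : ℝ) ^ 2 := by nlinarith [Real.sq_sqrt ht.le]
  calc _ ≤ ENNReal.ofReal (exp (t * (cosh (2 * x / (5 * t)) - 1))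
          * (sinh (2 * x / (5 * t) * a) / sinh (2 * x / (5 * t) * (a + x)))) :=
        measure_reach_le_exp_mul_sinh_div_sinh hmξ hindep hξ1 hξ2 ht.le hN ha (by positivity)
    _ ≤ _ := ENNReal.ofReal_le_ofReal
        (exp_cosh_mul_sinh_div_sinh_le ht (by exact_mod_cast ha) hx hx9 hx2)

/-- Let `T_y` be the first hitting time of `y` for a rate-1
continuous-time simple random walk on ℤ started at the origin, realized by i.i.d. fair
`±1` steps `ξ` and a Poisson(`t`) number `N` of jumps by time `t`.  The event
`{T_x < T_{−a}, T_x ≤ t}` is exactly that the walk skeleton reaches `x` within `N` steps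
without previously visiting `−a`.  For `t > 0`, integer `a > 0` and integer `x` with
`3√t ≤ x ≤ 2t`, its probability is at most `(2a/(a+x)) e^{−x²/(12t)}`. -/
theorem stmt14 {Ω : Type*} [MeasurableSpace Ω] (μ : Measure Ω) [IsProbabilityMeasure μ]
    (t : ℝ) (ht : 0 < t) (a x : ℕ) (ha : 0 < a)
    (hx1 : 3 * Real.sqrt t ≤ (x : ℝ)) (hx2 : (x : ℝ) ≤ 2 * t)
    (ξ : ℕ → Ω → ℤ) (N : Ω → ℕ)
    (hmξ : ∀ i, Measurable (ξ i)) (hmN : Measurable N)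
    (hindep : iIndepFun (jointFam N ξ) μ)
    (hξ1 : ∀ i, μ {ω | ξ i ω = 1} = ENNReal.ofReal (1 / 2))
    (hξ2 : ∀ i, μ {ω | ξ i ω = -1} = ENNReal.ofReal (1 / 2))
    (hN : ∀ n : ℕ, μ {ω | N ω = n}
        = ENNReal.ofReal (Real.exp (-t) * t ^ n / (n.factorial : ℝ))) :
    μ {ω | ∃ j ≤ N ω, (∑ i ∈ Finset.range j, ξ i ω) = (x : ℤ)
            ∧ ∀ i < j, (∑ i' ∈ Finset.range i, ξ i' ω) ≠ -(a : ℤ)}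
      ≤ ENNReal.ofReal (2 * a / (a + x) * Real.exp (-(x : ℝ) ^ 2 / (12 * t))) :=
  stmt14_general μ t ht a x ha hx1 hx2 ξ N hmξ hindep hξ1 hξ2 hN
end

section
/- Let T_m be the first hitting time of m for a discrete-time simple random walk from the origin, and T'_m the hitting time for a random walk jumping right with probability p > 1/2. For any positive integers a and b, the conditional distribution of T_b given {T_b < T_{−a}} is stochastically larger than the conditional distribution of T'_b given {T'_b < T'_{−a}}. -/
/-!
Split `{T_b < T_{-a}}` according to the value `j` of `T_b`. Every first-passage path of length
`j` from `0` to `b` has `(j + b) / 2` up-steps and `(j - b) / 2` down-steps, so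
`P'(T'_b = j < T'_{-a}) = (√(p / q)) ^ b (2 √(p q)) ^ j P(T_b = j < T_{-a})` with `q = 1 - p`.
Since `2 √(p q) ≤ 1` this density is decreasing in `j`, and tilting a law on `ℕ` by a decreasing
density makes it stochastically smaller: the tilt takes weight from the times after any `n` and
gives it to the times before.
-/

open MeasureTheory ProbabilityTheory Finset Function

namespace HittingTime

theorem measureReal_iUnion {α ι : Type*} [Countable ι] [MeasurableSpace α] {μ : Measure α}
    [IsFiniteMeasure μ] {f : ι → Set α} (hd : Pairwise (Disjoint on f))
    (hm : ∀ i, MeasurableSet (f i)) : μ.real (⋃ i, f i) = ∑' i, μ.real (f i) := by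
  rw [measureReal_def, measure_iUnion hd hm, ENNReal.tsum_toReal_eq fun i => measure_ne_top μ _]
  rfl

theorem sum_range_div_tsum_le_of_antitone {v f : ℕ → ℝ} (hv : ∀ j, 0 ≤ v j) (hsv : Summable v)
    (hf : Antitone f) (hf_pos : ∀ j, 0 < f j) (n : ℕ) :
    (∑ j ∈ range n, v j) / ∑' j, v j ≤ (∑ j ∈ range n, f j * v j) / ∑' j, f j * v j := by
  have hw : ∀ j, 0 ≤ f j * v j := fun j => mul_nonneg (hf_pos j).le (hv j)
  rcases (tsum_nonneg hv).eq_or_lt with hzero | hpos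
  · rw [← hzero, div_zero]
    exact div_nonneg (sum_nonneg fun j _ => hw j) (tsum_nonneg hw)
  obtain ⟨i, hi⟩ : ∃ i, 0 < v i := by
    by_contra! h
    simp [le_antisymm (h _) (hv _)] at hpos
  have hsw : Summable fun j => f j * v j :=
    (hsv.mul_left (f 0)).of_nonneg_of_le hw fun j => mul_le_mul_of_nonneg_right (hf j.zero_le) (hv j)
  rw [div_le_div_iff₀ hpos (hsw.tsum_pos hw i (mul_pos (hf_pos i) hi)),
    ← hsv.sum_add_tsum_nat_add n, ← hsw.sum_add_tsum_nat_add n]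
  -- `f n` separates the weights of the times before `n` from those of the times after it
  have head : f n * ∑ j ∈ range n, v j ≤ ∑ j ∈ range n, f j * v j := by
    rw [mul_sum]
    exact sum_le_sum fun j hj => mul_le_mul_of_nonneg_right (hf (mem_range.1 hj).le) (hv j)
  have tail : ∑' k, f (k + n) * v (k + n) ≤ f n * ∑' k, v (k + n) := by
    rw [← tsum_mul_left]
    exact ((summable_nat_add_iff n).2 hsw).tsum_le_tsum
      (fun k => mul_le_mul_of_nonneg_right (hf (Nat.le_add_left n k)) (hv _))
      (((summable_nat_add_iff n).2 hsv).mul_left _)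
  have hA : 0 ≤ ∑ j ∈ range n, v j := sum_nonneg fun j _ => hv j
  have hT : 0 ≤ ∑' k, v (k + n) := tsum_nonneg fun k => hv _
  nlinarith [mul_le_mul_of_nonneg_left tail hA, mul_le_mul_of_nonneg_right head hT]

theorem pow_mul_pow_sub_of_two_mul_eq_add {qt qf : ℝ} (hqt : 0 ≤ qt) (hqf : 0 < qf) {t j b : ℕ}
    (ht : 2 * t = j + b) (htj : t ≤ j) :
    qt ^ t * qf ^ (j - t) = (√qt / √qf) ^ b * √(qt * qf) ^ j := by
  obtain ⟨d, rfl⟩ : ∃ d, j = 2 * d + b := ⟨j - t, by omega⟩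
  obtain rfl : t = d + b := by omega
  rw [Real.sqrt_mul hqt, div_pow, mul_pow, show 2 * d + b - (d + b) = d by omega]
  conv_lhs => rw [← Real.sq_sqrt hqt, ← Real.sq_sqrt hqf.le]
  field_simp
  ring

theorem two_mul_sqrt_mul_one_sub_le_one (p : ℝ) : 2 * √(p * (1 - p)) ≤ 1 := by
  have : √(p * (1 - p)) ≤ 1 / 2 :=
    Real.sqrt_le_iff.2 ⟨by norm_num, by nlinarith [sq_nonneg (2 * p - 1)]⟩
  linarith

def partialSum (x : ℕ → ℤ) (k : ℕ) : ℤ := ∑ i ∈ range k, x i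

def FirstHitsAt (a b : ℕ) (x : ℕ → ℤ) (j : ℕ) : Prop :=
  partialSum x j = b ∧ ∀ k < j, partialSum x k ≠ -a ∧ partialSum x k ≠ b

section Paths

variable {a b j : ℕ} {x y : ℕ → ℤ}

theorem partialSum_congr {k : ℕ} (hk : k ≤ j) (h : ∀ i < j, x i = y i) :
    partialSum x k = partialSum y k :=
  sum_congr rfl fun i hi => h i ((mem_range.1 hi).trans_le hk)

theorem firstHitsAt_congr (h : ∀ i < j, x i = y i) : FirstHitsAt a b x j ↔ FirstHitsAt a b y j := by
  have hk : ∀ k < j, partialSum x k = partialSum y k := fun k hk => partialSum_congr hk.le h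
  simp only [FirstHitsAt, partialSum_congr le_rfl h]
  exact and_congr_right' <| forall₂_congr fun k hkj => by rw [hk k hkj]

theorem FirstHitsAt.ne_neg (h : FirstHitsAt a b x j) : ∀ k < j, partialSum x k ≠ -a :=
  fun k hk => (h.2 k hk).1

theorem exists_firstHitsAt_le (hj : partialSum x j = b) (havoid : ∀ k < j, partialSum x k ≠ -a) :
    ∃ i ≤ j, FirstHitsAt a b x i := by
  have hex : ∃ i, partialSum x i = b := ⟨j, hj⟩
  have hle : Nat.find hex ≤ j := Nat.find_min' hex hj
  exact ⟨Nat.find hex, hle, Nat.find_spec hex, fun k hk =>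
    ⟨havoid k (hk.trans_le hle), Nat.find_min hex hk⟩⟩

/-- A `±1` path is encoded by the set of times of its up-steps. -/
def pathSteps (S : Finset ℕ) (i : ℕ) : ℤ := if i ∈ S then 1 else -1

open Classical in
noncomputable def firstPassagePaths (a b j : ℕ) : Finset (Finset ℕ) :=
  (range j).powerset.filter fun S => FirstHitsAt a b (pathSteps S) j

theorem partialSum_pathSteps {S : Finset ℕ} (hS : S ⊆ range j) :
    partialSum (pathSteps S) j = 2 * #S - j := by
  simp only [partialSum, pathSteps]
  rw [sum_ite, filter_mem_eq_inter, inter_eq_right.2 hS,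
    filter_notMem_eq_sdiff, sum_const, sum_const, card_sdiff_of_subset hS, card_range,
    nsmul_eq_mul, nsmul_eq_mul, Nat.cast_sub (card_le_card hS |>.trans_eq (card_range j))]
  ring

theorem mem_firstPassagePaths {S : Finset ℕ} :
    S ∈ firstPassagePaths a b j ↔ S ⊆ range j ∧ FirstHitsAt a b (pathSteps S) j := by
  simp [firstPassagePaths]

theorem two_mul_card_of_mem_firstPassagePaths {S : Finset ℕ} (hS : S ∈ firstPassagePaths a b j) :
    2 * #S = j + b := by
  obtain ⟨hsub, hhit, -⟩ := mem_firstPassagePaths.1 hS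
  rw [partialSum_pathSteps hsub] at hhit
  omega

theorem card_le_of_mem_firstPassagePaths {S : Finset ℕ}
    (hS : S ∈ firstPassagePaths a b j) : #S ≤ j :=
  (card_le_card (mem_firstPassagePaths.1 hS).1).trans_eq (card_range j)

end Paths

section Walk

variable {Ω : Type*} {ξ : ℕ → Ω → ℤ} {a b j : ℕ}

def hitEvent (a b : ℕ) (ξ : ℕ → Ω → ℤ) (j : ℕ) : Set Ω := {ω | FirstHitsAt a b (ξ · ω) j}

def cylinder (ξ : ℕ → Ω → ℤ) (j : ℕ) (S : Finset ℕ) : Set Ω := {ω | ∀ i < j, ξ i ω = pathSteps S i}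

theorem pairwise_disjoint_hitEvent : Pairwise (Disjoint on hitEvent a b ξ) := by
  intro j k hjk
  wlog h : j < k generalizing j k
  · exact (this hjk.symm (hjk.lt_or_gt.resolve_left h)).symm
  exact Set.disjoint_left.2 fun ω hj hk => (hk.2 j h).2 hj.1

theorem disjoint_cylinder {S T : Finset ℕ} (hS : S ⊆ range j) (hT : T ⊆ range j) (hST : S ≠ T) :
    Disjoint (cylinder ξ j S) (cylinder ξ j T) := by
  refine Set.disjoint_left.2 fun ω hωS hωT => hST <| ext fun i => ?_
  by_cases hi : i < j
  · have := (hωS i hi).symm.trans (hωT i hi)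
    by_cases hiS : i ∈ S <;> by_cases hiT : i ∈ T <;> simp_all [pathSteps]
  · exact iff_of_false (fun h => hi (mem_range.1 (hS h))) (fun h => hi (mem_range.1 (hT h)))

theorem setOf_exists_le_eq_biUnion (m : ℕ) :
    {ω | ∃ j ≤ m, (∑ i ∈ range j, ξ i ω) = (b : ℤ) ∧ ∀ i < j, (∑ i' ∈ range i, ξ i' ω) ≠ -(a : ℤ)} =
      ⋃ j ∈ range (m + 1), hitEvent a b ξ j := by
  ext ω
  simp only [Set.mem_ofPred_eq, Set.mem_iUnion, mem_range, Nat.lt_succ_iff, exists_prop]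
  constructor
  · rintro ⟨j, hjm, hj, havoid⟩
    obtain ⟨i, hij, hi⟩ := exists_firstHitsAt_le (x := (ξ · ω)) hj havoid
    exact ⟨i, hij.trans hjm, hi⟩
  · rintro ⟨j, hjm, hj⟩
    exact ⟨j, hjm, hj.1, hj.ne_neg⟩

theorem setOf_exists_eq_iUnion :
    {ω | ∃ j, (∑ i ∈ range j, ξ i ω) = (b : ℤ) ∧ ∀ i < j, (∑ i' ∈ range i, ξ i' ω) ≠ -(a : ℤ)} =
      ⋃ j, hitEvent a b ξ j := by
  ext ω
  simp only [Set.mem_ofPred_eq, Set.mem_iUnion]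
  constructor
  · rintro ⟨j, hj, havoid⟩
    obtain ⟨i, -, hi⟩ := exists_firstHitsAt_le (x := (ξ · ω)) hj havoid
    exact ⟨i, hi⟩
  · rintro ⟨j, hj⟩
    exact ⟨j, hj.1, hj.ne_neg⟩

variable [MeasurableSpace Ω] {μ : Measure Ω}

theorem measurable_partialSum (hm : ∀ i, Measurable (ξ i)) (k : ℕ) :
    Measurable fun ω => partialSum (ξ · ω) k :=
  Finset.measurable_sum _ fun i _ => hm i

theorem measurableSet_hitEvent (hm : ∀ i, Measurable (ξ i)) : MeasurableSet (hitEvent a b ξ j) := by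
  have hS (k : ℕ) (c : ℤ) : MeasurableSet {ω | partialSum (ξ · ω) k = c} :=
    measurable_partialSum hm k (measurableSet_singleton c)
  simp only [hitEvent, FirstHitsAt, Set.ofPred_and, Set.ofPred_forall, ne_eq]
  exact (hS j b).inter <| .iInter fun k => .iInter fun _ => (hS k _).compl.inter (hS k b).compl

theorem measurableSet_cylinder (hm : ∀ i, Measurable (ξ i)) (S : Finset ℕ) :
    MeasurableSet (cylinder ξ j S) := by
  simp only [cylinder, Set.ofPred_forall]
  exact .iInter fun i => .iInter fun _ => hm i (measurableSet_singleton _)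

variable {qt qf : ℝ}

theorem measure_cylinder (hind : iIndepFun ξ μ)
    (hqt : 0 ≤ qt) (hqf : 0 ≤ qf)
    (h1 : ∀ i, μ {ω | ξ i ω = 1} = ENNReal.ofReal qt)
    (h2 : ∀ i, μ {ω | ξ i ω = -1} = ENNReal.ofReal qf) {S : Finset ℕ} (hS : S ⊆ range j) :
    μ (cylinder ξ j S) = ENNReal.ofReal (qt ^ #S * qf ^ (j - #S)) := by
  have hcyl : cylinder ξ j S = ⋂ i ∈ range j, ξ i ⁻¹' {pathSteps S i} := by
    ext ω; simp [cylinder]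
  have hstep (i : ℕ) : μ (ξ i ⁻¹' {pathSteps S i}) = ENNReal.ofReal (if i ∈ S then qt else qf) := by
    by_cases hi : i ∈ S <;> simp [pathSteps, hi, Set.preimage, h1, h2]
  rw [hcyl, hind.measure_inter_preimage_eq_mul _ fun i _ => measurableSet_singleton _]
  simp only [hstep]
  rw [← ENNReal.ofReal_prod_of_nonneg fun i _ => by split_ifs <;> assumption, prod_ite,
    filter_mem_eq_inter, inter_eq_right.2 hS, filter_notMem_eq_sdiff, prod_const, prod_const,
    card_sdiff_of_subset hS, card_range]

theorem ae_eq_one_or_neg_one [IsProbabilityMeasure μ] (hm : ∀ i, Measurable (ξ i))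
    (hqt : 0 ≤ qt) (hqf : 0 ≤ qf) (hsum : qt + qf = 1)
    (h1 : ∀ i, μ {ω | ξ i ω = 1} = ENNReal.ofReal qt)
    (h2 : ∀ i, μ {ω | ξ i ω = -1} = ENNReal.ofReal qf) :
    ∀ᵐ ω ∂μ, ∀ i, ξ i ω = 1 ∨ ξ i ω = -1 := by
  refine ae_all_iff.2 fun i => ?_
  have h1m : MeasurableSet {ω | ξ i ω = 1} := hm i (measurableSet_singleton 1)
  have h2m : MeasurableSet {ω | ξ i ω = -1} := hm i (measurableSet_singleton (-1))
  have hor : {ω | ξ i ω = 1 ∨ ξ i ω = -1} = {ω | ξ i ω = 1} ∪ {ω | ξ i ω = -1} := Set.ofPred_or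
  refine (ae_iff_measure_eq (hor ▸ (h1m.union h2m).nullMeasurableSet)).2 ?_
  have hdisj : Disjoint {ω | ξ i ω = 1} {ω | ξ i ω = -1} :=
    Set.disjoint_left.2 fun ω h h' => by simp_all
  rw [hor, measure_union hdisj h2m,
    h1, h2, ← ENNReal.ofReal_add hqt hqf, hsum, measure_univ, ENNReal.ofReal_one]

theorem hitEvent_ae_eq_biUnion [IsProbabilityMeasure μ] (hm : ∀ i, Measurable (ξ i))
    (hqt : 0 ≤ qt) (hqf : 0 ≤ qf) (hsum : qt + qf = 1)
    (h1 : ∀ i, μ {ω | ξ i ω = 1} = ENNReal.ofReal qt)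
    (h2 : ∀ i, μ {ω | ξ i ω = -1} = ENNReal.ofReal qf) :
    hitEvent a b ξ j =ᵐ[μ] ⋃ S ∈ firstPassagePaths a b j, cylinder ξ j S := by
  refine Filter.eventuallyEq_set.2 ?_
  filter_upwards [ae_eq_one_or_neg_one hm hqt hqf hsum h1 h2] with ω hω
  simp only [hitEvent, cylinder, Set.mem_iUnion, Set.mem_ofPred_eq, exists_prop,
    mem_firstPassagePaths]
  constructor
  · intro hhit
    set S := (range j).filter fun i => ξ i ω = 1
    have hcyl : ∀ i < j, ξ i ω = pathSteps S i := fun i hi => by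
      rcases hω i with h | h <;> simp [S, pathSteps, hi, h]
    exact ⟨S, ⟨filter_subset _ _, (firstHitsAt_congr hcyl).1 hhit⟩, hcyl⟩
  · rintro ⟨S, ⟨-, hS⟩, hcyl⟩
    exact (firstHitsAt_congr hcyl).2 hS

theorem measureReal_hitEvent [IsProbabilityMeasure μ] (hm : ∀ i, Measurable (ξ i))
    (hind : iIndepFun ξ μ) (hqt : 0 ≤ qt) (hqf : 0 < qf) (hsum : qt + qf = 1)
    (h1 : ∀ i, μ {ω | ξ i ω = 1} = ENNReal.ofReal qt)
    (h2 : ∀ i, μ {ω | ξ i ω = -1} = ENNReal.ofReal qf) :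
    μ.real (hitEvent a b ξ j) =
      #(firstPassagePaths a b j) * ((√qt / √qf) ^ b * √(qt * qf) ^ j) := by
  have hpaths : ∀ S ∈ firstPassagePaths a b j, μ.real (cylinder ξ j S) =
      (√qt / √qf) ^ b * √(qt * qf) ^ j := fun S hS => by
    rw [measureReal_def, measure_cylinder hind hqt hqf.le h1 h2 (mem_firstPassagePaths.1 hS).1,
      pow_mul_pow_sub_of_two_mul_eq_add hqt hqf (two_mul_card_of_mem_firstPassagePaths hS)
        (card_le_of_mem_firstPassagePaths hS), ENNReal.toReal_ofReal (by positivity)]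
  rw [measureReal_congr (hitEvent_ae_eq_biUnion hm hqt hqf.le hsum h1 h2),
    measureReal_biUnion_finset
      (fun S hS T hT => disjoint_cylinder (mem_firstPassagePaths.1 hS).1 (mem_firstPassagePaths.1 hT).1)
      (fun S _ => measurableSet_cylinder hm S),
    sum_congr rfl hpaths, sum_const, nsmul_eq_mul]

theorem measureReal_setOf_exists_le [IsFiniteMeasure μ] (hm : ∀ i, Measurable (ξ i)) (m : ℕ) :
    μ.real {ω | ∃ j ≤ m, (∑ i ∈ range j, ξ i ω) = (b : ℤ) ∧
      ∀ i < j, (∑ i' ∈ range i, ξ i' ω) ≠ -(a : ℤ)} =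
      ∑ j ∈ range (m + 1), μ.real (hitEvent a b ξ j) :=
  setOf_exists_le_eq_biUnion m ▸ measureReal_biUnion_finset
    (pairwise_disjoint_hitEvent.set_pairwise _) fun j _ => measurableSet_hitEvent hm

theorem measureReal_setOf_exists [IsFiniteMeasure μ] (hm : ∀ i, Measurable (ξ i)) :
    μ.real {ω | ∃ j, (∑ i ∈ range j, ξ i ω) = (b : ℤ) ∧
      ∀ i < j, (∑ i' ∈ range i, ξ i' ω) ≠ -(a : ℤ)} = ∑' j, μ.real (hitEvent a b ξ j) :=
  setOf_exists_eq_iUnion ▸ measureReal_iUnion pairwise_disjoint_hitEvent fun _ =>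
    measurableSet_hitEvent hm

end Walk

end HittingTime

open HittingTime in
theorem stmt15_general {Ω Ω' : Type*} [MeasurableSpace Ω] [MeasurableSpace Ω']
    (μ : Measure Ω) (μ' : Measure Ω') [IsProbabilityMeasure μ] [IsProbabilityMeasure μ']
    (p : ℝ) (hp : 1 / 2 < p) (hp1 : p < 1)
    (a b : ℕ)
    (ξ : ℕ → Ω → ℤ) (ξ' : ℕ → Ω' → ℤ)
    (hmξ : ∀ i, Measurable (ξ i)) (hmξ' : ∀ i, Measurable (ξ' i))
    (hind : iIndepFun ξ μ)
    (hind' : iIndepFun ξ' μ')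
    (h1 : ∀ i, μ {ω | ξ i ω = 1} = ENNReal.ofReal (1 / 2))
    (h2 : ∀ i, μ {ω | ξ i ω = -1} = ENNReal.ofReal (1 / 2))
    (h1' : ∀ i, μ' {ω | ξ' i ω = 1} = ENNReal.ofReal p)
    (h2' : ∀ i, μ' {ω | ξ' i ω = -1} = ENNReal.ofReal (1 - p)) :
    ∀ m : ℕ,
      (μ {ω | ∃ j ≤ m, (∑ i ∈ Finset.range j, ξ i ω) = (b : ℤ)
            ∧ ∀ i < j, (∑ i' ∈ Finset.range i, ξ i' ω) ≠ -(a : ℤ)}).toReal /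
        (μ {ω | ∃ j, (∑ i ∈ Finset.range j, ξ i ω) = (b : ℤ)
            ∧ ∀ i < j, (∑ i' ∈ Finset.range i, ξ i' ω) ≠ -(a : ℤ)}).toReal
      ≤ (μ' {ω | ∃ j ≤ m, (∑ i ∈ Finset.range j, ξ' i ω) = (b : ℤ)
            ∧ ∀ i < j, (∑ i' ∈ Finset.range i, ξ' i' ω) ≠ -(a : ℤ)}).toReal /
        (μ' {ω | ∃ j, (∑ i ∈ Finset.range j, ξ' i ω) = (b : ℤ)
            ∧ ∀ i < j, (∑ i' ∈ Finset.range i, ξ' i' ω) ≠ -(a : ℤ)}).toReal := by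
  intro m
  have hp0 : 0 < p := by linarith
  have hq0 : 0 < 1 - p := by linarith
  set r := 2 * √(p * (1 - p))
  set C := (√p / √(1 - p)) ^ b
  have hratio (j : ℕ) : μ'.real (hitEvent a b ξ' j) = C * r ^ j * μ.real (hitEvent a b ξ j) := by
    rw [measureReal_hitEvent hmξ' hind' hp0.le hq0 (by ring) h1' h2',
      measureReal_hitEvent hmξ hind (by norm_num) (by norm_num) (by norm_num) h1 h2,
      div_self (by positivity), Real.sqrt_mul_self (by norm_num), one_pow]
    have hr : r ^ j * (1 / 2) ^ j = √(p * (1 - p)) ^ j := by rw [← mul_pow]; ring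
    linear_combination (-C * #(firstPassagePaths a b j)) * hr
  have hanti : Antitone fun j => C * r ^ j := fun i j hij => mul_le_mul_of_nonneg_left
    (pow_le_pow_of_le_one (by positivity) (two_mul_sqrt_mul_one_sub_le_one p) hij) (by positivity)
  simp only [← measureReal_def, measureReal_setOf_exists_le hmξ, measureReal_setOf_exists hmξ,
    measureReal_setOf_exists_le hmξ', measureReal_setOf_exists hmξ', hratio]
  exact sum_range_div_tsum_le_of_antitone (fun _ => measureReal_nonneg)
    (summable_measure_toReal (fun _ => measurableSet_hitEvent hmξ) pairwise_disjoint_hitEvent)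
    hanti (fun _ => by positivity) (m + 1)

/-- Let `T_m` be the first hitting time of `m` for a discrete-time
simple random walk from the origin (steps `ξ`, fair), and `T'_m` the hitting time for a
walk jumping right with probability `p > 1/2` (steps `ξ'`).  For positive integers `a, b`,
the conditional law of `T_b` given `{T_b < T_{−a}}` is stochastically larger than that of
`T'_b` given `{T'_b < T'_{−a}}`; equivalently, for every `m`,
`P(T_b ≤ m | T_b < T_{−a}) ≤ P(T'_b ≤ m | T'_b < T'_{−a})`. -/
theorem stmt15 {Ω Ω' : Type*} [MeasurableSpace Ω] [MeasurableSpace Ω']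
    (μ : Measure Ω) (μ' : Measure Ω') [IsProbabilityMeasure μ] [IsProbabilityMeasure μ']
    (p : ℝ) (hp : 1 / 2 < p) (hp1 : p < 1)
    (a b : ℕ) (ha : 0 < a) (hb : 0 < b)
    (ξ : ℕ → Ω → ℤ) (ξ' : ℕ → Ω' → ℤ)
    (hmξ : ∀ i, Measurable (ξ i)) (hmξ' : ∀ i, Measurable (ξ' i))
    (hind : iIndepFun ξ μ)
    (hind' : iIndepFun ξ' μ')
    (h1 : ∀ i, μ {ω | ξ i ω = 1} = ENNReal.ofReal (1 / 2))
    (h2 : ∀ i, μ {ω | ξ i ω = -1} = ENNReal.ofReal (1 / 2))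
    (h1' : ∀ i, μ' {ω | ξ' i ω = 1} = ENNReal.ofReal p)
    (h2' : ∀ i, μ' {ω | ξ' i ω = -1} = ENNReal.ofReal (1 - p)) :
    ∀ m : ℕ,
      (μ {ω | ∃ j ≤ m, (∑ i ∈ Finset.range j, ξ i ω) = (b : ℤ)
            ∧ ∀ i < j, (∑ i' ∈ Finset.range i, ξ i' ω) ≠ -(a : ℤ)}).toReal /
        (μ {ω | ∃ j, (∑ i ∈ Finset.range j, ξ i ω) = (b : ℤ)
            ∧ ∀ i < j, (∑ i' ∈ Finset.range i, ξ i' ω) ≠ -(a : ℤ)}).toReal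
      ≤ (μ' {ω | ∃ j ≤ m, (∑ i ∈ Finset.range j, ξ' i ω) = (b : ℤ)
            ∧ ∀ i < j, (∑ i' ∈ Finset.range i, ξ' i' ω) ≠ -(a : ℤ)}).toReal /
        (μ' {ω | ∃ j, (∑ i ∈ Finset.range j, ξ' i ω) = (b : ℤ)
            ∧ ∀ i < j, (∑ i' ∈ Finset.range i, ξ' i' ω) ≠ -(a : ℤ)}).toReal :=
  stmt15_general μ μ' p hp hp1 a b ξ ξ' hmξ hmξ' hind hind' h1 h2 h1' h2'
end

section
/- Suppose a nonnegative integer-valued random variable X with mean μ > 0 admits a coupling with its size-bias transform X^s that is (c,q)-bounded for the lower tail: P(X^s ≤ X + c | X) ≥ q almost surely. Then P(X = 0) ≤ exp(−q μ / c). -/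
/-!
Write `M(t) = E[exp (t X)]` for `t ≤ 0`. Differentiating and using the size-bias identity,
`M'(t) = E[X exp (t X)] = m E[exp (t Xˢ)]`, and on the event `Xˢ ≤ X + c`, which has conditional
probability at least `q` given `X`, `exp (t Xˢ) ≥ exp (c t) exp (t X)`. Hence
`M' ≥ q m exp (c t) M`, so `M(t) exp (-(q m / c) exp (c t))` is monotone on `(-∞, 0]` and
`P(X = 0) ≤ M(t) ≤ exp ((q m / c) (exp (c t) - 1))`; let `t → -∞`.
-/

open MeasureTheory ProbabilityTheory Filter Topology Set Real
open scoped ENNReal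

section NatValued

variable {Ω : Type*} [MeasurableSpace Ω] {X Xs : Ω → ℕ}

lemma lintegral_comp_nat_eq_tsum (ν : Measure Ω) (hX : Measurable X) (f : ℕ → ℝ≥0∞) :
    ∫⁻ ω, f (X ω) ∂ν = ∑' k, f k * ν {ω | X ω = k} := by
  rw [← lintegral_map (measurable_of_countable f) hX, lintegral_countable']
  congr! 2 with k
  rw [Measure.map_apply hX (measurableSet_singleton k)]; rfl

lemma lintegral_natCast_mul_eq_of_sizeBias {μ : Measure Ω} (hX : Measurable X)
    (hXs : Measurable Xs) {m : ℝ}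
    (hsb : ∀ k : ℕ, μ {ω | Xs ω = k} * ENNReal.ofReal m = k * μ {ω | X ω = k})
    (f : ℕ → ℝ≥0∞) :
    ∫⁻ ω, X ω * f (X ω) ∂μ = ENNReal.ofReal m * ∫⁻ ω, f (Xs ω) ∂μ := by
  rw [lintegral_comp_nat_eq_tsum μ hX (fun k => k * f k), lintegral_comp_nat_eq_tsum μ hXs,
    ← ENNReal.tsum_mul_left]
  refine tsum_congr fun k => ?_
  rw [mul_right_comm, ← hsb k]
  ring

lemma ofReal_mul_lintegral_le_lintegral_of_lowerTail {μ : Measure Ω} (hX : Measurable X)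
    (hXs : Measurable Xs) {c q : ℝ}
    (hcoupling : ∀ k : ℕ, ENNReal.ofReal q * μ {ω | X ω = k}
        ≤ μ {ω | X ω = k ∧ (Xs ω : ℝ) ≤ (X ω : ℝ) + c})
    {f g : ℕ → ℝ≥0∞} (hfg : ∀ j k : ℕ, (j : ℝ) ≤ k + c → g k ≤ f j) :
    ENNReal.ofReal q * ∫⁻ ω, g (X ω) ∂μ ≤ ∫⁻ ω, f (Xs ω) ∂μ := by
  set E := {ω | (Xs ω : ℝ) ≤ (X ω : ℝ) + c}
  calc ENNReal.ofReal q * ∫⁻ ω, g (X ω) ∂μ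
      ≤ ∫⁻ ω in E, g (X ω) ∂μ := by
        rw [lintegral_comp_nat_eq_tsum _ hX, lintegral_comp_nat_eq_tsum _ hX,
          ← ENNReal.tsum_mul_left]
        refine ENNReal.tsum_le_tsum fun k => ?_
        have hk : MeasurableSet {ω | X ω = k} := hX (measurableSet_singleton k)
        rw [Measure.restrict_apply hk, mul_left_comm]
        gcongr; exact hcoupling k
    _ ≤ ∫⁻ ω in E, f (Xs ω) ∂μ :=
        setLIntegral_mono ((measurable_of_countable f).comp hXs) fun ω hω => hfg _ _ hω
    _ ≤ ∫⁻ ω, f (Xs ω) ∂μ := setLIntegral_le_lintegral _ _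

end NatValued

section NonnegMgf

variable {Ω : Type*} [MeasurableSpace Ω] {μ : Measure Ω} [IsFiniteMeasure μ] {Y : Ω → ℝ}

lemma integrable_exp_mul_of_nonpos (hY : Measurable Y) (hY0 : ∀ ω, 0 ≤ Y ω) {t : ℝ}
    (ht : t ≤ 0) : Integrable (fun ω => exp (t * Y ω)) μ :=
  Integrable.of_bound (by fun_prop) 1 <| ae_of_all _ fun ω => by
    rw [norm_eq_abs, abs_exp, exp_le_one_iff]
    exact mul_nonpos_of_nonpos_of_nonneg ht (hY0 ω)

lemma Iio_subset_interior_integrableExpSet (hY : Measurable Y) (hY0 : ∀ ω, 0 ≤ Y ω) :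
    Iio 0 ⊆ interior (integrableExpSet Y μ) := by
  rw [← interior_Iic]
  exact interior_mono fun t ht => integrable_exp_mul_of_nonpos hY hY0 ht

lemma continuousOn_mgf_Iic (hY : Measurable Y) (hY0 : ∀ ω, 0 ≤ Y ω) :
    ContinuousOn (mgf Y μ) (Iic 0) :=
  continuousOn_of_dominated (bound := fun _ => 1)
    (fun t ht => (integrable_exp_mul_of_nonpos hY hY0 ht).aestronglyMeasurable)
    (fun t ht => ae_of_all _ fun ω => by
      rw [norm_eq_abs, abs_exp, exp_le_one_iff]
      exact mul_nonpos_of_nonpos_of_nonneg ht (hY0 ω))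
    (integrable_const 1) (ae_of_all _ fun ω => by fun_prop)

end NonnegMgf

lemma monotoneOn_mul_exp_neg {D : Set ℝ} (hD : Convex ℝ D) {M M' g g' : ℝ → ℝ}
    (hM : ContinuousOn M D) (hg : ContinuousOn g D)
    (hM' : ∀ x ∈ interior D, HasDerivAt M (M' x) x)
    (hg' : ∀ x ∈ interior D, HasDerivAt g (g' x) x)
    (hle : ∀ x ∈ interior D, g' x * M x ≤ M' x) :
    MonotoneOn (fun x => M x * exp (-g x)) D := by
  refine monotoneOn_of_hasDerivWithinAt_nonneg hD (hM.mul hg.neg.rexp)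
    (fun x hx => ((hM' x hx).mul (hg' x hx).neg.exp).hasDerivWithinAt) fun x hx => ?_
  have := mul_nonneg (exp_pos (-g x)).le (sub_nonneg.2 (hle x hx))
  simp only [Pi.neg_apply]
  linarith

section SizeBiasCoupling

variable {Ω : Type*} [MeasurableSpace Ω] {μ : Measure Ω} [IsFiniteMeasure μ]
  {X Xs : Ω → ℕ}

lemma ofReal_mgf_natCast (hX : Measurable X) {t : ℝ} (ht : t ≤ 0) :
    ENNReal.ofReal (mgf (fun ω => (X ω : ℝ)) μ t)
      = ∫⁻ ω, ENNReal.ofReal (exp (t * X ω)) ∂μ :=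
  ofReal_integral_eq_lintegral_ofReal (integrable_exp_mul_of_nonpos (by fun_prop)
    (fun ω => Nat.cast_nonneg _) ht) (ae_of_all _ fun ω => (exp_pos _).le)

lemma ofReal_integral_natCast_mul_exp (hX : Measurable X) {t : ℝ} (ht : t < 0) :
    ENNReal.ofReal μ[fun ω => (X ω : ℝ) * exp (t * X ω)]
      = ∫⁻ ω, X ω * ENNReal.ofReal (exp (t * X ω)) ∂μ := by
  have hint := integrable_pow_mul_exp_of_mem_interior_integrableExpSet
    (Iio_subset_interior_integrableExpSet (μ := μ) (Y := fun ω => (X ω : ℝ)) (by fun_prop)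
      (fun ω => Nat.cast_nonneg _) ht) 1
  simp only [pow_one] at hint
  rw [ofReal_integral_eq_lintegral_ofReal hint
    (ae_of_all _ fun ω => mul_nonneg (Nat.cast_nonneg _) (exp_pos _).le)]
  refine lintegral_congr fun ω => ?_
  rw [ENNReal.ofReal_mul (Nat.cast_nonneg _), ENNReal.ofReal_natCast]

lemma measure_eq_zero_le_ofReal_mgf (hX : Measurable X) {t : ℝ} (ht : t ≤ 0) :
    μ {ω | X ω = 0} ≤ ENNReal.ofReal (mgf (fun ω => (X ω : ℝ)) μ t) := by
  rw [ofReal_mgf_natCast hX ht,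
    lintegral_comp_nat_eq_tsum μ hX (fun k => ENNReal.ofReal (exp (t * k)))]
  simpa using
    ENNReal.le_tsum (f := fun k : ℕ => ENNReal.ofReal (exp (t * k)) * μ {ω | X ω = k}) 0

lemma mul_mgf_le_integral_mul_exp (hX : Measurable X) (hXs : Measurable Xs) {m c q : ℝ}
    (hm : 0 ≤ m) (hq : 0 ≤ q)
    (hsb : ∀ k : ℕ, μ {ω | Xs ω = k} * ENNReal.ofReal m = k * μ {ω | X ω = k})
    (hcoupling : ∀ k : ℕ, ENNReal.ofReal q * μ {ω | X ω = k}
        ≤ μ {ω | X ω = k ∧ (Xs ω : ℝ) ≤ (X ω : ℝ) + c})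
    {t : ℝ} (ht : t < 0) :
    q * m * exp (c * t) * mgf (fun ω => (X ω : ℝ)) μ t
      ≤ μ[fun ω => (X ω : ℝ) * exp (t * X ω)] := by
  have hshift : ∀ j k : ℕ, (j : ℝ) ≤ k + c →
      ENNReal.ofReal (exp (c * t)) * ENNReal.ofReal (exp (t * k))
        ≤ ENNReal.ofReal (exp (t * j)) :=
    fun j k hjk => by
      rw [← ENNReal.ofReal_mul (exp_pos _).le, ← exp_add]
      exact ENNReal.ofReal_le_ofReal (exp_le_exp.2 (by nlinarith))
  rw [← ENNReal.ofReal_le_ofReal_iff (integral_nonneg fun ω => by positivity)]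
  calc ENNReal.ofReal (q * m * exp (c * t) * mgf (fun ω => (X ω : ℝ)) μ t)
      = ENNReal.ofReal m * (ENNReal.ofReal q *
          ∫⁻ ω, ENNReal.ofReal (exp (c * t)) * ENNReal.ofReal (exp (t * X ω)) ∂μ) := by
        rw [lintegral_const_mul _ (by fun_prop), ← ofReal_mgf_natCast hX ht.le,
          ← ENNReal.ofReal_mul (exp_pos _).le, ← ENNReal.ofReal_mul hq,
          ← ENNReal.ofReal_mul hm]
        ring_nf
    _ ≤ ENNReal.ofReal m * ∫⁻ ω, ENNReal.ofReal (exp (t * Xs ω)) ∂μ := by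
        gcongr
        exact ofReal_mul_lintegral_le_lintegral_of_lowerTail hX hXs hcoupling
          (f := fun j => ENNReal.ofReal (exp (t * j))) hshift
    _ = ENNReal.ofReal μ[fun ω => (X ω : ℝ) * exp (t * X ω)] := by
        rw [ofReal_integral_natCast_mul_exp hX ht, lintegral_natCast_mul_eq_of_sizeBias hX hXs hsb
          (fun k => ENNReal.ofReal (exp (t * k)))]

end SizeBiasCoupling

lemma mgf_le_exp_of_sizeBias {Ω : Type*} [MeasurableSpace Ω] {μ : Measure Ω}
    [IsProbabilityMeasure μ] {X Xs : Ω → ℕ} (hX : Measurable X) (hXs : Measurable Xs)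
    {m c q : ℝ} (hm : 0 ≤ m) (hc : 0 < c) (hq : 0 ≤ q)
    (hsb : ∀ k : ℕ, μ {ω | Xs ω = k} * ENNReal.ofReal m = k * μ {ω | X ω = k})
    (hcoupling : ∀ k : ℕ, ENNReal.ofReal q * μ {ω | X ω = k}
        ≤ μ {ω | X ω = k ∧ (Xs ω : ℝ) ≤ (X ω : ℝ) + c})
    {t : ℝ} (ht : t ≤ 0) :
    mgf (fun ω => (X ω : ℝ)) μ t ≤ exp (q * m / c * exp (c * t) - q * m / c) := by
  set Y : Ω → ℝ := fun ω => X ω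
  have hY : Measurable Y := by fun_prop
  have hY0 : ∀ ω, 0 ≤ Y ω := fun ω => Nat.cast_nonneg _
  have hg : ∀ t, HasDerivAt (fun t => q * m / c * exp (c * t)) (q * m * exp (c * t)) t :=
    fun t =>
      (((hasDerivAt_id' t).const_mul c).exp.const_mul (q * m / c)).congr_deriv (by field_simp)
  have hmono : MonotoneOn (fun t => mgf Y μ t * exp (-(q * m / c * exp (c * t)))) (Iic 0) := by
    refine monotoneOn_mul_exp_neg (convex_Iic 0) (continuousOn_mgf_Iic hY hY0)
      (by fun_prop) (fun t ht => hasDerivAt_mgf ?_) (fun t _ => hg t) fun t ht => ?_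
    · exact Iio_subset_interior_integrableExpSet hY hY0 (by simpa using ht)
    · exact mul_mgf_le_integral_mul_exp hX hXs hm hq hsb hcoupling (by simpa using ht)
  have h0 := hmono ht self_mem_Iic ht
  simp only [mgf_zero, one_mul, mul_zero, exp_zero, mul_one] at h0
  calc mgf Y μ t
        = mgf Y μ t * exp (-(q * m / c * exp (c * t))) * exp (q * m / c * exp (c * t)) := by
          rw [mul_assoc, ← exp_add, neg_add_cancel, exp_zero, mul_one]
    _ ≤ exp (-(q * m / c)) * exp (q * m / c * exp (c * t)) := by gcongr
    _ = exp (q * m / c * exp (c * t) - q * m / c) := by rw [← exp_add]; ring_nf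

theorem stmt16_general {Ω : Type*} [MeasurableSpace Ω] (μ : Measure Ω) [IsProbabilityMeasure μ]
    (X Xs : Ω → ℕ) (hmX : Measurable X) (hmXs : Measurable Xs)
    (m : ℝ) (hmpos : 0 < m)
    (c q : ℝ) (hc : 0 < c) (hq0 : 0 < q)
    (hsb : ∀ k : ℕ, μ {ω | Xs ω = k} * ENNReal.ofReal m
        = (k : ENNReal) * μ {ω | X ω = k})
    (hcoupling : ∀ k : ℕ, ENNReal.ofReal q * μ {ω | X ω = k}
        ≤ μ {ω | X ω = k ∧ (Xs ω : ℝ) ≤ (X ω : ℝ) + c}) :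
    μ {ω | X ω = 0} ≤ ENNReal.ofReal (Real.exp (-(q * m) / c)) := by
  have hbound : ∀ t ≤ 0,
      μ {ω | X ω = 0} ≤ ENNReal.ofReal (exp (q * m / c * exp (c * t) - q * m / c)) :=
    fun t ht => (measure_eq_zero_le_ofReal_mgf hmX ht).trans <| ENNReal.ofReal_le_ofReal <|
      mgf_le_exp_of_sizeBias hmX hmXs hmpos.le hc hq0.le hsb hcoupling ht
  have hlim : Tendsto (fun t => ENNReal.ofReal (exp (q * m / c * exp (c * t) - q * m / c)))
      atBot (𝓝 (ENNReal.ofReal (exp (-(q * m) / c)))) := by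
    have h0 : Tendsto (fun t => exp (c * t)) atBot (𝓝 0) :=
      tendsto_exp_atBot.comp (tendsto_id.const_mul_atBot hc)
    have := ENNReal.tendsto_ofReal ((h0.const_mul (q * m / c)).sub_const (q * m / c)).rexp
    rwa [mul_zero, zero_sub, ← neg_div] at this
  exact ge_of_tendsto hlim ((eventually_le_atBot 0).mono hbound)

/-- Suppose a nonnegative integer-valued random variable `X` with mean
`m > 0` admits a coupling `(X, Xs)` with its size-bias transform
(`P(Xs = k) = k P(X = k) / m`) that is `(c, q)`-bounded for the lower tail, i.e.
`P(Xs ≤ X + c | X = k) ≥ q` for every `k`.  Then `P(X = 0) ≤ exp(−q m / c)`. -/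
theorem stmt16 {Ω : Type*} [MeasurableSpace Ω] (μ : Measure Ω) [IsProbabilityMeasure μ]
    (X Xs : Ω → ℕ) (hmX : Measurable X) (hmXs : Measurable Xs)
    (hint : Integrable (fun ω => (X ω : ℝ)) μ)
    (m : ℝ) (hm : m = ∫ ω, (X ω : ℝ) ∂μ) (hmpos : 0 < m)
    (c q : ℝ) (hc : 0 < c) (hq0 : 0 < q) (hq1 : q ≤ 1)
    (hsb : ∀ k : ℕ, μ {ω | Xs ω = k} * ENNReal.ofReal m
        = (k : ENNReal) * μ {ω | X ω = k})
    (hcoupling : ∀ k : ℕ, ENNReal.ofReal q * μ {ω | X ω = k}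
        ≤ μ {ω | X ω = k ∧ (Xs ω : ℝ) ≤ (X ω : ℝ) + c}) :
    μ {ω | X ω = 0} ≤ ENNReal.ofReal (Real.exp (-(q * m) / c)) :=
  stmt16_general μ X Xs hmX hmXs m hmpos c q hc hq0 hsb hcoupling
end
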